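/- arXiv:2006.15267 — 4 statements merged into one kernel-verified Lean document; each statement's English description precedes it below -/
import Mathlib

section
/- Let (H, β) be a Hom-Hopf algebra. Then H is a right-right Yetter-Drinfel'd module over itself with right coaction the comultiplication Δ and right action x ◁ h = Sβ^{-1}(h_1)(β^{-1}(x)β^{-2}(h_2)), i.e. it satisfies (x ◁ h_2)_{(0)} ⊗ β²(h_1)(x ◁ h_2)_{(1)} = x_{(0)} ◁ β(h_1) ⊗ β(x_{(1)})β²(h_2). -/
open TensorProduct

namespace HomHopf

variable (k : Type) [Field k]

/-- A Hom-algebra. -/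
structure HomAlg (A : Type) [AddCommGroup A] [Module k A] : Type where
  mul : A →ₗ[k] A →ₗ[k] A
  one : A
  zmap : A →ₗ[k] A
  zmap_mul : ∀ a b, zmap (mul a b) = mul (zmap a) (zmap b)
  hom_assoc : ∀ a b c, mul (zmap a) (mul b c) = mul (mul a b) (zmap c)
  zmap_one : zmap one = one
  one_mul : ∀ a, mul one a = zmap a
  mul_one : ∀ a, mul a one = zmap a

/-- A Hom-bialgebra. -/
structure Bialg (H : Type) [AddCommGroup H] [Module k H] : Type where
  mul : H →ₗ[k] H →ₗ[k] H
  one : H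
  comul : H →ₗ[k] H ⊗[k] H
  counit : H →ₗ[k] k
  bmap : H →ₗ[k] H
  bmap_mul : ∀ a b, bmap (mul a b) = mul (bmap a) (bmap b)
  hom_assoc : ∀ a b c, mul (bmap a) (mul b c) = mul (mul a b) (bmap c)
  bmap_one : bmap one = one
  one_mul : ∀ a, mul one a = bmap a
  mul_one : ∀ a, mul a one = bmap a
  comul_bmap : ∀ c, comul (bmap c) = TensorProduct.map bmap bmap (comul c)
  coassoc : ∀ c, TensorProduct.map bmap comul (comul c)
      = TensorProduct.assoc k H H H (TensorProduct.map comul bmap (comul c))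
  counit_bmap : ∀ c, counit (bmap c) = counit c
  counit_comul : ∀ c,
      TensorProduct.lid k H (TensorProduct.map counit LinearMap.id (comul c)) = bmap c
  comul_counit : ∀ c,
      TensorProduct.rid k H (TensorProduct.map LinearMap.id counit (comul c)) = bmap c
  comul_mul : ∀ a b, comul (mul a b) = TensorProduct.map₂ mul mul (comul a) (comul b)
  comul_one : comul one = one ⊗ₜ[k] one
  counit_mul : ∀ a b, counit (mul a b) = counit a * counit b
  counit_one : counit one = 1

/-- A Hom-Hopf algebra. -/
structure Hopf (H : Type) [AddCommGroup H] [Module k H] extends Bialg k H where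
  S : H →ₗ[k] H
  S_mul_id : ∀ h,
      TensorProduct.lift mul (TensorProduct.map S LinearMap.id (comul h)) = counit h • one
  id_mul_S : ∀ h,
      TensorProduct.lift mul (TensorProduct.map LinearMap.id S (comul h)) = counit h • one
  S_bmap : ∀ h, S (bmap h) = bmap (S h)

variable {H : Type} [AddCommGroup H] [Module k H]
variable {M N P V W U : Type}
  [AddCommGroup M] [Module k M] [AddCommGroup N] [Module k N]
  [AddCommGroup P] [Module k P] [AddCommGroup V] [Module k V]
  [AddCommGroup W] [Module k W] [AddCommGroup U] [Module k U]

/-- Left Hom-module. -/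
structure IsLMod (A : Bialg k H) (ζ : M →ₗ[k] M) (act : H →ₗ[k] M →ₗ[k] M) : Prop where
  assoc : ∀ a b m, act (A.bmap a) (act b m) = act (A.mul a b) (ζ m)
  zeta_act : ∀ a m, ζ (act a m) = act (A.bmap a) (ζ m)
  one_act : ∀ m, act A.one m = ζ m

/-- Right Hom-module. -/
structure IsRMod (A : Bialg k H) (ζ : M →ₗ[k] M) (ract : M →ₗ[k] H →ₗ[k] M) : Prop where
  assoc : ∀ m a b, ract (ract m a) (A.bmap b) = ract (ζ m) (A.mul a b)
  zeta_act : ∀ m a, ζ (ract m a) = ract (ζ m) (A.bmap a)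
  act_one : ∀ m, ract m A.one = ζ m

/-- Left Hom-module over a plain Hom-algebra structure (given by raw data). -/
structure IsLModOf {A : Type} [AddCommGroup A] [Module k A]
    (mul : A →ₗ[k] A →ₗ[k] A) (one : A) (zmap : A →ₗ[k] A)
    (ζ : M →ₗ[k] M) (act : A →ₗ[k] M →ₗ[k] M) : Prop where
  assoc : ∀ a b m, act (zmap a) (act b m) = act (mul a b) (ζ m)
  zeta_act : ∀ a m, ζ (act a m) = act (zmap a) (ζ m)
  one_act : ∀ m, act one m = ζ m

/-- Right Hom-module over a plain Hom-algebra structure. -/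
structure IsRModOf {A : Type} [AddCommGroup A] [Module k A]
    (mul : A →ₗ[k] A →ₗ[k] A) (one : A) (zmap : A →ₗ[k] A)
    (ζ : M →ₗ[k] M) (ract : M →ₗ[k] A →ₗ[k] M) : Prop where
  assoc : ∀ m a b, ract (ract m a) (zmap b) = ract (ζ m) (mul a b)
  zeta_act : ∀ m a, ζ (ract m a) = ract (ζ m) (zmap a)
  act_one : ∀ m, ract m one = ζ m

/-- Left Hom-comodule. -/
structure IsLCom (A : Bialg k H) (ζ : M →ₗ[k] M) (ρ : M →ₗ[k] H ⊗[k] M) : Prop where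
  coact_zeta : ∀ m, ρ (ζ m) = TensorProduct.map A.bmap ζ (ρ m)
  counit_coact : ∀ m, TensorProduct.lid k M (TensorProduct.map A.counit LinearMap.id (ρ m)) = ζ m
  coassoc : ∀ m, TensorProduct.map A.bmap ρ (ρ m)
      = TensorProduct.assoc k H H M (TensorProduct.map A.comul ζ (ρ m))

/-- Right Hom-comodule. -/
structure IsRCom (A : Bialg k H) (ζ : M →ₗ[k] M) (ρ : M →ₗ[k] M ⊗[k] H) : Prop where
  coact_zeta : ∀ m, ρ (ζ m) = TensorProduct.map ζ A.bmap (ρ m)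
  coact_counit : ∀ m, TensorProduct.rid k M (TensorProduct.map LinearMap.id A.counit (ρ m)) = ζ m
  coassoc : ∀ m, TensorProduct.map ρ A.bmap (ρ m)
      = (TensorProduct.assoc k M H H).symm (TensorProduct.map ζ A.comul (ρ m))

/-- `(h·m)_{[-1]} ⊗ (h·m)_{[0]} = h_1 m_{[-1]} ⊗ h_2 · m_{[0]}`. -/
def LLcompat (A : Bialg k H) (act : H →ₗ[k] M →ₗ[k] M) (ρ : M →ₗ[k] H ⊗[k] M) : Prop :=
  ∀ h m, ρ (act h m) = TensorProduct.map₂ A.mul act (A.comul h) (ρ m)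

/-- `(h·m)_{(0)} ⊗ (h·m)_{(1)} = h_1 · m_{(0)} ⊗ h_2 m_{(1)}`. -/
def LRcompat (A : Bialg k H) (act : H →ₗ[k] M →ₗ[k] M) (ρ : M →ₗ[k] M ⊗[k] H) : Prop :=
  ∀ h m, ρ (act h m) = TensorProduct.map₂ act A.mul (A.comul h) (ρ m)

/-- `(m·h)_{[-1]} ⊗ (m·h)_{[0]} = m_{[-1]} h_1 ⊗ m_{[0]} · h_2`. -/
def RLcompat (A : Bialg k H) (ract : M →ₗ[k] H →ₗ[k] M) (ρ : M →ₗ[k] H ⊗[k] M) : Prop :=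
  ∀ m h, ρ (ract m h) = TensorProduct.map₂ A.mul ract (ρ m) (A.comul h)

/-- `(m·h)_{(0)} ⊗ (m·h)_{(1)} = m_{(0)} · h_1 ⊗ m_{(1)} h_2`. -/
def RRcompat (A : Bialg k H) (ract : M →ₗ[k] H →ₗ[k] M) (ρ : M →ₗ[k] M ⊗[k] H) : Prop :=
  ∀ m h, ρ (ract m h) = TensorProduct.map₂ ract A.mul (ρ m) (A.comul h)

/-- Four-angle H-Hopf module. -/
structure IsFourAngle (A : Hopf k H) (ζ : M →ₗ[k] M)
    (lact : H →ₗ[k] M →ₗ[k] M) (ract : M →ₗ[k] H →ₗ[k] M)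
    (ρl : M →ₗ[k] H ⊗[k] M) (ρr : M →ₗ[k] M ⊗[k] H) : Prop where
  lmod : IsLMod k A.toBialg ζ lact
  rmod : IsRMod k A.toBialg ζ ract
  bimod : ∀ a m b, lact (A.bmap a) (ract m b) = ract (lact a m) (A.bmap b)
  lcom : IsLCom k A.toBialg ζ ρl
  rcom : IsRCom k A.toBialg ζ ρr
  bicom : ∀ m, TensorProduct.map A.bmap ρr (ρl m)
      = TensorProduct.assoc k H M H (TensorProduct.map ρl A.bmap (ρr m))
  cll : LLcompat k A.toBialg lact ρl
  clr : LRcompat k A.toBialg lact ρr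
  crl : RLcompat k A.toBialg ract ρl
  crr : RRcompat k A.toBialg ract ρr

/-- Yetter–Drinfel'd compatibility, stated via arbitrary finite representations of `Δ(h)`. -/
def ydCompat (A : Bialg k H) (ract : V →ₗ[k] H →ₗ[k] V) (ρ : V →ₗ[k] V ⊗[k] H) : Prop :=
  ∀ (v : V) (h : H) (ι : Type) (s : Finset ι) (h1 h2 : ι → H),
    A.comul h = ∑ i ∈ s, h1 i ⊗ₜ[k] h2 i →
    ∑ i ∈ s, TensorProduct.map LinearMap.id (A.mul (A.bmap (A.bmap (h1 i))))
        (ρ (ract v (h2 i)))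
      = ∑ i ∈ s, TensorProduct.map (ract.flip (A.bmap (h1 i)))
          (((A.mul.flip (A.bmap (A.bmap (h2 i)))).comp A.bmap)) (ρ v)

/-- Right-right Yetter–Drinfel'd module. -/
structure IsYD (A : Hopf k H) (ζ : V →ₗ[k] V)
    (ract : V →ₗ[k] H →ₗ[k] V) (ρ : V →ₗ[k] V ⊗[k] H) : Prop where
  rmod : IsRMod k A.toBialg ζ ract
  rcom : IsRCom k A.toBialg ζ ρ
  compat : ydCompat k A.toBialg ract ρ

/-- The braiding `c_{V,W}(v ⊗ w) = ζ_W⁻¹(w_(0)) ⊗ ζ_V⁻¹(v) ◁ β⁻²(w_(1))`. -/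
noncomputable def braid (ract : V →ₗ[k] H →ₗ[k] V) (ζVinv : V →ₗ[k] V)
    (ρ : W →ₗ[k] W ⊗[k] H) (ζWinv : W →ₗ[k] W) (βinv : H →ₗ[k] H) :
    V ⊗[k] W →ₗ[k] W ⊗[k] V :=
  (TensorProduct.map LinearMap.id (TensorProduct.lift (ract.comp ζVinv))).comp
    ((TensorProduct.leftComm k V W H).toLinearMap.comp
      (TensorProduct.map LinearMap.id ((TensorProduct.map ζWinv (βinv.comp βinv)).comp ρ)))

/-- The action on the tensor product of two YD modules:
`(v ⊗ w) ◁ h = v ◁ β⁻¹(h_1) ⊗ w ◁ β⁻¹(h_2)`. -/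
noncomputable def ydAct (A : Bialg k H) (βinv : H →ₗ[k] H)
    (ractV : V →ₗ[k] H →ₗ[k] V) (ractW : W →ₗ[k] H →ₗ[k] W) :
    V ⊗[k] W →ₗ[k] H →ₗ[k] V ⊗[k] W :=
  (TensorProduct.map₂ ractV ractW).compl₂ ((TensorProduct.map βinv βinv).comp A.comul)

/-- The coaction on the tensor product of two YD modules:
`ρ(v ⊗ w) = v_(0) ⊗ w_(0) ⊗ β⁻¹(v_(1) w_(1))`. -/
noncomputable def ydCoact (A : Bialg k H) (βinv : H →ₗ[k] H)
    (ρV : V →ₗ[k] V ⊗[k] H) (ρW : W →ₗ[k] W ⊗[k] H) :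
    V ⊗[k] W →ₗ[k] (V ⊗[k] W) ⊗[k] H :=
  (TensorProduct.map LinearMap.id (βinv.comp (TensorProduct.lift A.mul))).comp
    ((TensorProduct.tensorTensorTensorComm k V H W H).toLinearMap.comp
      (TensorProduct.map ρV ρW))


end HomHopf
namespace HomHopfAux
open TensorProduct LinearMap


structure CH (k : Type) [Field k] (H : Type) [AddCommGroup H] [Module k H] : Type where
  mu : H →ₗ[k] H →ₗ[k] H
  de : H →ₗ[k] H ⊗[k] H
  ep : H →ₗ[k] k
  un : H
  St : H →ₗ[k] H
  massoc : ∀ a b c : H, mu (mu a b) c = mu a (mu b c)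
  mone : ∀ a : H, mu un a = a
  onem : ∀ a : H, mu a un = a
  coassoc : ∀ x : H, (LinearMap.lTensor H de) (de x)
      = (TensorProduct.assoc k H H H) ((LinearMap.rTensor H de) (de x))
  counit_l : ∀ x : H, (TensorProduct.lid k H) ((LinearMap.rTensor H ep) (de x)) = x
  counit_r : ∀ x : H, (TensorProduct.rid k H) ((LinearMap.lTensor H ep) (de x)) = x
  anti_l : ∀ x : H, (TensorProduct.lift mu) ((LinearMap.rTensor H St) (de x)) = ep x • un
  anti_r : ∀ x : H, (TensorProduct.lift mu) ((LinearMap.lTensor H St) (de x)) = ep x • un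
  de_mul : ∀ a b : H, de (mu a b) = TensorProduct.map₂ mu mu (de a) (de b)
  de_un : de un = un ⊗ₜ[k] un
  ep_mul : ∀ a b : H, ep (mu a b) = ep a * ep b
  ep_un : ep un = 1

variable {k : Type} [Field k] {H : Type} [AddCommGroup H] [Module k H]
variable (C : CH k H)

theorem ex_rep (t : H ⊗[k] H) : ∃ s : Finset (H × H), t = ∑ i ∈ s, i.1 ⊗ₜ[k] i.2 :=
  TensorProduct.exists_finset t

section reps
variable {ι : Type} {x : H} {s : Finset ι} {f g : ι → H}

theorem counit_l_rep (hx : C.de x = ∑ i ∈ s, f i ⊗ₜ[k] g i) :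
    ∑ i ∈ s, C.ep (f i) • g i = x := by
  have := C.counit_l x
  rw [hx] at this
  simpa [map_sum] using this

theorem counit_r_rep (hx : C.de x = ∑ i ∈ s, f i ⊗ₜ[k] g i) :
    ∑ i ∈ s, C.ep (g i) • f i = x := by
  have := C.counit_r x
  rw [hx] at this
  simpa [map_sum] using this

theorem anti_l_rep (hx : C.de x = ∑ i ∈ s, f i ⊗ₜ[k] g i) :
    ∑ i ∈ s, C.mu (C.St (f i)) (g i) = C.ep x • C.un := by
  have := C.anti_l x
  rw [hx] at this
  simpa [map_sum] using this

theorem anti_r_rep (hx : C.de x = ∑ i ∈ s, f i ⊗ₜ[k] g i) :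
    ∑ i ∈ s, C.mu (f i) (C.St (g i)) = C.ep x • C.un := by
  have := C.anti_r x
  rw [hx] at this
  simpa [map_sum] using this

end reps

theorem S_un : C.St C.un = C.un := by
  have := C.anti_l C.un
  rw [C.de_un, C.ep_un, one_smul] at this
  simpa [C.onem] using this

/-- right-nested iterated coproducts -/
noncomputable def CH.D2 : H →ₗ[k] H ⊗[k] (H ⊗[k] H) := (LinearMap.lTensor H C.de) ∘ₗ C.de
noncomputable def CH.D3 : H →ₗ[k] H ⊗[k] (H ⊗[k] (H ⊗[k] H)) :=
  (LinearMap.lTensor H (LinearMap.lTensor H C.de)) ∘ₗ C.D2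
noncomputable def CH.D4 : H →ₗ[k] H ⊗[k] (H ⊗[k] (H ⊗[k] (H ⊗[k] H))) :=
  (LinearMap.lTensor H (LinearMap.lTensor H (LinearMap.lTensor H C.de))) ∘ₗ C.D3

section Dreps
variable {ι : Type} {x : H} {s : Finset ι} {f g : ι → H}

theorem D2_rep (hx : C.de x = ∑ i ∈ s, f i ⊗ₜ[k] g i) :
    C.D2 x = ∑ i ∈ s, f i ⊗ₜ[k] C.de (g i) := by
  simp [CH.D2, hx, map_sum]

/-- expansion with δ applied to the *first* leg (uses coassociativity) -/
theorem D2_rep' {ι' : Type} {u : ι → Finset ι'} {f' g' : ι → ι' → H}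
    (hx : C.de x = ∑ i ∈ s, f i ⊗ₜ[k] g i)
    (hu : ∀ i ∈ s, C.de (f i) = ∑ j ∈ u i, f' i j ⊗ₜ[k] g' i j) :
    C.D2 x = ∑ i ∈ s, ∑ j ∈ u i, f' i j ⊗ₜ[k] (g' i j ⊗ₜ[k] g i) := by
  have h := C.coassoc x
  have : C.D2 x = (TensorProduct.assoc k H H H) ((LinearMap.rTensor H C.de) (C.de x)) := h
  rw [this, hx]
  rw [map_sum, map_sum]
  refine Finset.sum_congr rfl fun i hi => ?_
  rw [rTensor_tmul, hu i hi, sum_tmul, map_sum]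
  exact Finset.sum_congr rfl fun j hj => by simp

theorem D3_rep (hx : C.de x = ∑ i ∈ s, f i ⊗ₜ[k] g i) :
    C.D3 x = ∑ i ∈ s, f i ⊗ₜ[k] C.D2 (g i) := by
  have h : C.D3 x = (LinearMap.lTensor H (LinearMap.lTensor H C.de)) (C.D2 x) := rfl
  rw [h, D2_rep C hx, map_sum]
  simp [CH.D2]

theorem D3_rep' {ι' : Type} {u : ι → Finset ι'} {f' g' : ι → ι' → H}
    (hx : C.de x = ∑ i ∈ s, f i ⊗ₜ[k] g i)
    (hu : ∀ i ∈ s, C.de (f i) = ∑ j ∈ u i, f' i j ⊗ₜ[k] g' i j) :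
    C.D3 x = ∑ i ∈ s, ∑ j ∈ u i, f' i j ⊗ₜ[k] (g' i j ⊗ₜ[k] C.de (g i)) := by
  simp [CH.D3, D2_rep' C hx hu, map_sum]

theorem D4_rep (hx : C.de x = ∑ i ∈ s, f i ⊗ₜ[k] g i) :
    C.D4 x = ∑ i ∈ s, f i ⊗ₜ[k] C.D3 (g i) := by
  have h : C.D4 x = (LinearMap.lTensor H (LinearMap.lTensor H (LinearMap.lTensor H C.de))) (C.D3 x) := rfl
  rw [h, D3_rep C hx, map_sum]
  simp [CH.D3, CH.D2]

theorem D4_rep' {ι' : Type} {u : ι → Finset ι'} {f' g' : ι → ι' → H}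
    (hx : C.de x = ∑ i ∈ s, f i ⊗ₜ[k] g i)
    (hu : ∀ i ∈ s, C.de (f i) = ∑ j ∈ u i, f' i j ⊗ₜ[k] g' i j) :
    C.D4 x = ∑ i ∈ s, ∑ j ∈ u i, f' i j ⊗ₜ[k] (g' i j ⊗ₜ[k] C.D2 (g i)) := by
  simp [CH.D4, D3_rep' C hx hu, map_sum, CH.D2]

end Dreps

theorem sum4_comm {α : Type} [AddCommMonoid α] {ι₁ ι₂ ι₃ ι₄ : Type}
    (t : Finset ι₁) (g : ι₁ → Finset ι₂) (s : Finset ι₃) (f : ι₃ → Finset ι₄)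
    (F : ι₃ → ι₄ → ι₁ → ι₂ → α) :
    ∑ j ∈ t, ∑ m ∈ g j, ∑ i ∈ s, ∑ l ∈ f i, F i l j m
      = ∑ i ∈ s, ∑ j ∈ t, ∑ l ∈ f i, ∑ m ∈ g j, F i l j m := by
  rw [show (∑ j ∈ t, ∑ m ∈ g j, ∑ i ∈ s, ∑ l ∈ f i, F i l j m)
      = ∑ j ∈ t, ∑ i ∈ s, ∑ m ∈ g j, ∑ l ∈ f i, F i l j m from
    Finset.sum_congr rfl fun j _ => Finset.sum_comm]
  rw [Finset.sum_comm]
  exact Finset.sum_congr rfl fun i _ => Finset.sum_congr rfl fun j _ => Finset.sum_comm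

noncomputable def CH.Phi6 : ((H ⊗[k] (H ⊗[k] H)) ⊗[k] (H ⊗[k] (H ⊗[k] H))) →ₗ[k] H :=
  (TensorProduct.lift C.mu) ∘ₗ
    (TensorProduct.map (C.St ∘ₗ TensorProduct.lift C.mu)
        ((TensorProduct.lift C.mu) ∘ₗ (TensorProduct.map (TensorProduct.lift C.mu)
            ((TensorProduct.lift C.mu) ∘ₗ (TensorProduct.map C.St C.St)
              ∘ₗ (TensorProduct.comm k H H).toLinearMap))
          ∘ₗ (TensorProduct.tensorTensorTensorComm k H H H H).toLinearMap)) ∘ₗ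
    (TensorProduct.tensorTensorTensorComm k H (H ⊗[k] H) H (H ⊗[k] H)).toLinearMap

theorem Phi6_tmul (a1 a2 a3 b1 b2 b3 : H) :
    C.Phi6 ((a1 ⊗ₜ[k] (a2 ⊗ₜ[k] a3)) ⊗ₜ[k] (b1 ⊗ₜ[k] (b2 ⊗ₜ[k] b3)))
      = C.mu (C.St (C.mu a1 b1))
          (C.mu (C.mu a2 b2) (C.mu (C.St b3) (C.St a3))) := by
  simp [CH.Phi6]

theorem antimult (a b : H) : C.St (C.mu a b) = C.mu (C.St b) (C.St a) := by
  choose D hD using fun y : H => ex_rep (C.de y)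
  have e1 : C.Phi6 (C.D2 a ⊗ₜ[k] C.D2 b)
      = ∑ i ∈ D a, ∑ j ∈ D b, ∑ l ∈ D i.2, ∑ m ∈ D j.2,
          C.mu (C.St (C.mu i.1 j.1))
            (C.mu (C.mu l.1 m.1) (C.mu (C.St m.2) (C.St l.2))) := by
    rw [D2_rep C (hD a), D2_rep C (hD b)]
    simp only [hD, tmul_sum, sum_tmul, map_sum, Phi6_tmul]
    rw [sum4_comm]
  have e2 : C.Phi6 (C.D2 a ⊗ₜ[k] C.D2 b)
      = ∑ i ∈ D a, ∑ j ∈ D b, ∑ l ∈ D i.1, ∑ m ∈ D j.1,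
          C.mu (C.St (C.mu l.1 m.1))
            (C.mu (C.mu l.2 m.2) (C.mu (C.St j.2) (C.St i.2))) := by
    rw [D2_rep' C (hD a) (fun i _ => hD i.1), D2_rep' C (hD b) (fun j _ => hD j.1)]
    simp only [tmul_sum, sum_tmul, map_sum, Phi6_tmul]
    rw [sum4_comm]
  -- way 1 : = St (mu a b)
  have w1 : C.Phi6 (C.D2 a ⊗ₜ[k] C.D2 b) = C.St (C.mu a b) := by
    rw [e1]
    have step1 : ∀ (i j : H × H),
        ∑ l ∈ D i.2, ∑ m ∈ D j.2,
          C.mu (C.St (C.mu i.1 j.1))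
            (C.mu (C.mu l.1 m.1) (C.mu (C.St m.2) (C.St l.2)))
          = C.ep j.2 • C.ep i.2 • C.mu (C.St (C.mu i.1 j.1)) C.un := by
      intro i j
      have hre : ∀ l m : H × H,
          C.mu (C.mu l.1 m.1) (C.mu (C.St m.2) (C.St l.2))
            = C.mu l.1 (C.mu (C.mu m.1 (C.St m.2)) (C.St l.2)) := by
        intro l m
        rw [C.massoc]
        congr 1
        rw [← C.massoc]
      simp only [hre]
      have hm : ∀ l : H × H,
          ∑ m ∈ D j.2, C.mu (C.St (C.mu i.1 j.1))
              (C.mu l.1 (C.mu (C.mu m.1 (C.St m.2)) (C.St l.2)))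
            = C.ep j.2 • C.mu (C.St (C.mu i.1 j.1)) (C.mu l.1 (C.St l.2)) := by
        intro l
        have h2 := congrArg (fun z => C.mu (C.St (C.mu i.1 j.1))
            (C.mu l.1 (C.mu z (C.St l.2)))) (anti_r_rep C (hD j.2))
        simp only [map_sum, LinearMap.sum_apply, map_smul, LinearMap.smul_apply] at h2
        simpa [C.mone] using h2
      simp only [hm]
      rw [← Finset.smul_sum]
      congr 1
      have h3 := congrArg (fun z => C.mu (C.St (C.mu i.1 j.1)) z) (anti_r_rep C (hD i.2))
      simpa [map_sum] using h3
    simp only [step1, C.onem]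
    calc ∑ i ∈ D a, ∑ j ∈ D b, C.ep j.2 • C.ep i.2 • C.St (C.mu i.1 j.1)
        = ∑ i ∈ D a, ∑ j ∈ D b, C.St (C.mu (C.ep i.2 • i.1) (C.ep j.2 • j.1)) := by
          refine Finset.sum_congr rfl fun i _ => Finset.sum_congr rfl fun j _ => ?_
          simp only [map_smul, LinearMap.smul_apply]
          all_goals rw [smul_comm]
      _ = C.St (C.mu (∑ i ∈ D a, C.ep i.2 • i.1) (∑ j ∈ D b, C.ep j.2 • j.1)) := by
          simp only [map_sum, LinearMap.sum_apply]
          rw [Finset.sum_comm]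
      _ = C.St (C.mu a b) := by
          rw [counit_r_rep C (hD a), counit_r_rep C (hD b)]
  -- way 2 : = mu (St b) (St a)
  have w2 : C.Phi6 (C.D2 a ⊗ₜ[k] C.D2 b) = C.mu (C.St b) (C.St a) := by
    rw [e2]
    have step2 : ∀ (i j : H × H),
        ∑ l ∈ D i.1, ∑ m ∈ D j.1,
          C.mu (C.St (C.mu l.1 m.1))
            (C.mu (C.mu l.2 m.2) (C.mu (C.St j.2) (C.St i.2)))
          = (C.ep i.1 * C.ep j.1) • C.mu (C.St j.2) (C.St i.2) := by
      intro i j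
      have hassoc : ∀ (l m : H × H),
          C.mu (C.St (C.mu l.1 m.1)) (C.mu (C.mu l.2 m.2) (C.mu (C.St j.2) (C.St i.2)))
            = C.mu (C.mu (C.St (C.mu l.1 m.1)) (C.mu l.2 m.2))
                (C.mu (C.St j.2) (C.St i.2)) := by
        intro l m; rw [← C.massoc]
      simp only [hassoc]
      have hrep : C.de (C.mu i.1 j.1)
          = ∑ l ∈ D i.1, ∑ m ∈ D j.1, C.mu l.1 m.1 ⊗ₜ[k] C.mu l.2 m.2 := by
        rw [C.de_mul, hD i.1, hD j.1]
        simp only [map_sum, LinearMap.sum_apply, TensorProduct.map₂_apply_tmul, map_tmul,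
          tmul_sum, sum_tmul]
        rw [Finset.sum_comm]
      have hrep' : C.de (C.mu i.1 j.1)
          = ∑ p ∈ (D i.1) ×ˢ (D j.1), C.mu p.1.1 p.2.1 ⊗ₜ[k] C.mu p.1.2 p.2.2 := by
        rw [hrep, Finset.sum_product]
      have hcol := anti_l_rep C hrep'
      rw [Finset.sum_product] at hcol
      have h4 := congrArg (fun z => C.mu z (C.mu (C.St j.2) (C.St i.2))) hcol
      simp only [map_sum, LinearMap.sum_apply, map_smul, LinearMap.smul_apply] at h4
      rw [h4, C.ep_mul, C.mone, mul_smul]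
    simp only [step2]
    calc ∑ i ∈ D a, ∑ j ∈ D b, (C.ep i.1 * C.ep j.1) • C.mu (C.St j.2) (C.St i.2)
        = ∑ j ∈ D b, ∑ i ∈ D a, C.mu (C.St (C.ep j.1 • j.2)) (C.St (C.ep i.1 • i.2)) := by
          rw [Finset.sum_comm]
          refine Finset.sum_congr rfl fun j _ => Finset.sum_congr rfl fun i _ => ?_
          simp only [map_smul, LinearMap.smul_apply]
          all_goals rw [mul_smul, smul_comm]
      _ = C.mu (C.St (∑ j ∈ D b, C.ep j.1 • j.2)) (C.St (∑ i ∈ D a, C.ep i.1 • i.2)) := by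
          simp only [map_sum, LinearMap.sum_apply]
          rw [Finset.sum_comm]
      _ = C.mu (C.St b) (C.St a) := by
          rw [counit_l_rep C (hD b), counit_l_rep C (hD a)]
  rw [← w1, w2]
/-- componentwise multiplication on `H ⊗ H` -/
noncomputable def CH.mm : ((H ⊗[k] H) ⊗[k] (H ⊗[k] H)) →ₗ[k] (H ⊗[k] H) :=
  (TensorProduct.map (TensorProduct.lift C.mu) (TensorProduct.lift C.mu)) ∘ₗ
    (TensorProduct.tensorTensorTensorComm k H H H H).toLinearMap

theorem mm_tmul (x1 x2 y1 y2 : H) :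
    C.mm ((x1 ⊗ₜ[k] x2) ⊗ₜ[k] (y1 ⊗ₜ[k] y2)) = C.mu x1 y1 ⊗ₜ[k] C.mu x2 y2 := by
  simp [CH.mm]

theorem mm_de (u v : H) : C.mm (C.de u ⊗ₜ[k] C.de v) = C.de (C.mu u v) := by
  choose D hD using fun y : H => ex_rep (C.de y)
  rw [C.de_mul, hD u, hD v]
  simp only [sum_tmul, tmul_sum, map_sum, LinearMap.sum_apply, mm_tmul,
    TensorProduct.map₂_apply_tmul, map_tmul]

theorem mm_unr (Y : H ⊗[k] H) : C.mm (Y ⊗ₜ[k] (C.un ⊗ₜ[k] C.un)) = Y := by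
  obtain ⟨s, rfl⟩ := ex_rep Y
  simp [sum_tmul, map_sum, mm_tmul, C.onem]

theorem mm_unl (Y : H ⊗[k] H) : C.mm ((C.un ⊗ₜ[k] C.un) ⊗ₜ[k] Y) = Y := by
  obtain ⟨s, rfl⟩ := ex_rep Y
  simp [tmul_sum, map_sum, mm_tmul, C.mone]

theorem mm_assoc (p q r : H ⊗[k] H) :
    C.mm (p ⊗ₜ[k] C.mm (q ⊗ₜ[k] r)) = C.mm (C.mm (p ⊗ₜ[k] q) ⊗ₜ[k] r) := by
  obtain ⟨sp, rfl⟩ := ex_rep p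
  obtain ⟨sq, rfl⟩ := ex_rep q
  obtain ⟨sr, rfl⟩ := ex_rep r
  simp [sum_tmul, tmul_sum, map_sum, mm_tmul, C.massoc]

/-- `G = flip ∘ (S ⊗ S) ∘ Δ`, the claimed value of `Δ ∘ S`. -/
noncomputable def CH.Gs : H →ₗ[k] (H ⊗[k] H) :=
  (TensorProduct.comm k H H).toLinearMap ∘ₗ (TensorProduct.map C.St C.St) ∘ₗ C.de

theorem Gs_rep {ι : Type} {x : H} {s : Finset ι} {f g : ι → H}
    (hx : C.de x = ∑ i ∈ s, f i ⊗ₜ[k] g i) :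
    C.Gs x = ∑ i ∈ s, C.St (g i) ⊗ₜ[k] C.St (f i) := by
  simp [CH.Gs, hx, map_sum]

theorem claimA (y : H) :
    C.mm ((TensorProduct.map C.de (C.de ∘ₗ C.St)) (C.de y)) = C.ep y • (C.un ⊗ₜ[k] C.un) := by
  choose D hD using fun z : H => ex_rep (C.de z)
  rw [hD y, map_sum, map_sum]
  have h1 : ∀ i : H × H, C.mm ((TensorProduct.map C.de (C.de ∘ₗ C.St)) (i.1 ⊗ₜ[k] i.2))
      = C.de (C.mu i.1 (C.St i.2)) := by
    intro i
    rw [map_tmul]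
    exact mm_de C i.1 (C.St i.2)
  simp only [h1]
  rw [← map_sum, anti_r_rep C (hD y), map_smul, C.de_un]

theorem claimB (y : H) :
    C.mm ((TensorProduct.map C.Gs C.de) (C.de y)) = C.ep y • (C.un ⊗ₜ[k] C.un) := by
  choose D hD using fun z : H => ex_rep (C.de z)
  set mL := TensorProduct.lift C.mu with hmL
  set K : (H ⊗[k] (H ⊗[k] H)) →ₗ[k] (H ⊗[k] H) :=
    (TensorProduct.map mL LinearMap.id) ∘ₗ (TensorProduct.assoc k H H H).symm.toLinearMap
      ∘ₗ (TensorProduct.map C.St LinearMap.id) with hK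
  set PhiB : (H ⊗[k] (H ⊗[k] (H ⊗[k] H))) →ₗ[k] (H ⊗[k] H) :=
    (LinearMap.lTensor H (mL ∘ₗ TensorProduct.map C.St LinearMap.id)) ∘ₗ
      (TensorProduct.leftComm k H H H).toLinearMap ∘ₗ
      (LinearMap.lTensor H K) with hPhiB
  have PhiB_tmul : ∀ x1 x2 x3 x4 : H,
      PhiB (x1 ⊗ₜ[k] (x2 ⊗ₜ[k] (x3 ⊗ₜ[k] x4)))
        = (C.mu (C.St x2) x3) ⊗ₜ[k] (C.mu (C.St x1) x4) := by
    intro x1 x2 x3 x4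
    simp [hPhiB, hK, hmL]
  have lhs_eq : C.mm ((TensorProduct.map C.Gs C.de) (C.de y)) = PhiB (C.D3 y) := by
    rw [hD y, map_sum, map_sum, D3_rep' C (hD y) (fun i _ => hD i.1), map_sum]
    refine Finset.sum_congr rfl fun i _ => ?_
    have L : C.mm ((TensorProduct.map C.Gs C.de) (i.1 ⊗ₜ[k] i.2))
        = ∑ l ∈ D i.1, ∑ m ∈ D i.2,
            C.mu (C.St l.2) m.1 ⊗ₜ[k] C.mu (C.St l.1) m.2 := by
      rw [map_tmul, Gs_rep C (hD i.1), hD i.2, sum_tmul, map_sum]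
      refine Finset.sum_congr rfl fun l _ => ?_
      rw [tmul_sum, map_sum]
      exact Finset.sum_congr rfl fun m _ => mm_tmul C _ _ _ _
    have R : PhiB (∑ l ∈ D i.1, l.1 ⊗ₜ[k] (l.2 ⊗ₜ[k] C.de i.2))
        = ∑ l ∈ D i.1, ∑ m ∈ D i.2,
            C.mu (C.St l.2) m.1 ⊗ₜ[k] C.mu (C.St l.1) m.2 := by
      rw [map_sum]
      refine Finset.sum_congr rfl fun l _ => ?_
      rw [hD i.2, tmul_sum, tmul_sum, map_sum]
      exact Finset.sum_congr rfl fun m _ => PhiB_tmul _ _ _ _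
    rw [L, R]
  rw [lhs_eq, D3_rep C (hD y), map_sum]
  have key : ∀ i : H × H, PhiB (i.1 ⊗ₜ[k] C.D2 i.2)
      = C.un ⊗ₜ[k] C.mu (C.St i.1) i.2 := by
    intro i
    rw [D2_rep' C (hD i.2) (fun j _ => hD j.1), tmul_sum, map_sum]
    have inner : ∀ j ∈ D i.2,
        PhiB (i.1 ⊗ₜ[k] ∑ n ∈ D j.1, n.1 ⊗ₜ[k] (n.2 ⊗ₜ[k] j.2))
          = C.ep j.1 • (C.un ⊗ₜ[k] C.mu (C.St i.1) j.2) := by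
      intro j _
      rw [tmul_sum, map_sum]
      simp only [PhiB_tmul]
      rw [← sum_tmul, anti_l_rep C (hD j.1), smul_tmul']
    rw [Finset.sum_congr rfl inner]
    calc ∑ j ∈ D i.2, C.ep j.1 • (C.un ⊗ₜ[k] C.mu (C.St i.1) j.2)
        = C.un ⊗ₜ[k] C.mu (C.St i.1) (∑ j ∈ D i.2, C.ep j.1 • j.2) := by
          simp only [map_sum, map_smul, tmul_sum, tmul_smul]
      _ = C.un ⊗ₜ[k] C.mu (C.St i.1) i.2 := by rw [counit_l_rep C (hD i.2)]
  simp only [key]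
  calc ∑ i ∈ D y, C.un ⊗ₜ[k] C.mu (C.St i.1) i.2
      = C.un ⊗ₜ[k] ∑ i ∈ D y, C.mu (C.St i.1) i.2 := by rw [tmul_sum]
    _ = C.ep y • (C.un ⊗ₜ[k] C.un) := by rw [anti_l_rep C (hD y), tmul_smul]

theorem anticomult (x : H) : C.de (C.St x) = C.Gs x := by
  choose D hD using fun z : H => ex_rep (C.de z)
  set PhiC : (H ⊗[k] (H ⊗[k] H)) →ₗ[k] (H ⊗[k] H) :=
    C.mm ∘ₗ (TensorProduct.map C.Gs
      (C.mm ∘ₗ (TensorProduct.map C.de (C.de ∘ₗ C.St)))) with hPhiC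
  have ev1 : PhiC (C.D2 x) = C.Gs x := by
    rw [D2_rep C (hD x), map_sum]
    have h1 : ∀ i : H × H, PhiC (i.1 ⊗ₜ[k] C.de i.2)
        = C.ep i.2 • C.mm (C.Gs i.1 ⊗ₜ[k] (C.un ⊗ₜ[k] C.un)) := by
      intro i
      rw [hPhiC]
      simp only [LinearMap.comp_apply, map_tmul]
      rw [claimA C i.2, tmul_smul, map_smul]
    simp only [h1, mm_unr]
    calc ∑ i ∈ D x, C.ep i.2 • C.Gs i.1
        = C.Gs (∑ i ∈ D x, C.ep i.2 • i.1) := by rw [map_sum]; simp only [map_smul]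
      _ = C.Gs x := by rw [counit_r_rep C (hD x)]
  have ev2 : PhiC (C.D2 x) = C.de (C.St x) := by
    rw [D2_rep' C (hD x) (fun i _ => hD i.1), map_sum]
    have h2 : ∀ i ∈ D x, PhiC (∑ l ∈ D i.1, l.1 ⊗ₜ[k] (l.2 ⊗ₜ[k] i.2))
        = C.ep i.1 • C.mm ((C.un ⊗ₜ[k] C.un) ⊗ₜ[k] C.de (C.St i.2)) := by
      intro i _
      rw [map_sum]
      have h3 : ∀ l : H × H, PhiC (l.1 ⊗ₜ[k] (l.2 ⊗ₜ[k] i.2))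
          = C.mm (C.mm (C.Gs l.1 ⊗ₜ[k] C.de l.2) ⊗ₜ[k] C.de (C.St i.2)) := by
        intro l
        rw [hPhiC]
        simp only [LinearMap.comp_apply, map_tmul]
        rw [mm_assoc]
      simp only [h3]
      have h4 : ∑ l ∈ D i.1,
          C.mm (C.mm (C.Gs l.1 ⊗ₜ[k] C.de l.2) ⊗ₜ[k] C.de (C.St i.2))
            = C.mm ((∑ l ∈ D i.1, C.mm (C.Gs l.1 ⊗ₜ[k] C.de l.2)) ⊗ₜ[k] C.de (C.St i.2)) := by
        rw [sum_tmul, map_sum]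
      rw [h4]
      have h5 : ∑ l ∈ D i.1, C.mm (C.Gs l.1 ⊗ₜ[k] C.de l.2)
          = C.ep i.1 • (C.un ⊗ₜ[k] C.un) := by
        have := claimB C i.1
        rw [hD i.1, map_sum] at this
        simpa [map_tmul] using this
      rw [h5, ← smul_tmul', map_smul]
    rw [Finset.sum_congr rfl h2]
    simp only [mm_unl]
    calc ∑ i ∈ D x, C.ep i.1 • C.de (C.St i.2)
        = C.de (C.St (∑ i ∈ D x, C.ep i.1 • i.2)) := by
          simp only [map_sum, map_smul]
      _ = C.de (C.St x) := by rw [counit_l_rep C (hD x)]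
  rw [← ev2, ev1]
/-- the classical right adjoint action, uncurried -/
noncomputable def CH.aL : (H ⊗[k] H) →ₗ[k] H :=
  (TensorProduct.lift C.mu) ∘ₗ (TensorProduct.map C.St (TensorProduct.lift C.mu)) ∘ₗ
    (TensorProduct.leftComm k H H H).toLinearMap ∘ₗ (LinearMap.lTensor H C.de)

theorem aL_rep (v : H) {ι : Type} {x : H} {s : Finset ι} {f g : ι → H}
    (hx : C.de x = ∑ i ∈ s, f i ⊗ₜ[k] g i) :
    C.aL (v ⊗ₜ[k] x) = ∑ i ∈ s, C.mu (C.St (f i)) (C.mu v (g i)) := by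
  simp [CH.aL, hx, tmul_sum, map_sum]

theorem de_mul_rep (a b : H) {D : H → Finset (H × H)}
    (hD : ∀ y : H, C.de y = ∑ i ∈ D y, i.1 ⊗ₜ[k] i.2) :
    C.de (C.mu a b) = ∑ i ∈ D a, ∑ j ∈ D b, C.mu i.1 j.1 ⊗ₜ[k] C.mu i.2 j.2 := by
  rw [C.de_mul, hD a, hD b]
  simp only [map_sum, LinearMap.sum_apply, TensorProduct.map₂_apply_tmul, map_tmul,
    tmul_sum, sum_tmul]
  rw [Finset.sum_comm]

theorem adj_assoc (v a b : H) :
    C.aL (C.aL (v ⊗ₜ[k] a) ⊗ₜ[k] b) = C.aL (v ⊗ₜ[k] C.mu a b) := by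
  choose D hD using fun y : H => ex_rep (C.de y)
  have hrep := de_mul_rep C a b hD
  have hrep' : C.de (C.mu a b)
      = ∑ p ∈ (D a) ×ˢ (D b), C.mu p.1.1 p.2.1 ⊗ₜ[k] C.mu p.1.2 p.2.2 := by
    rw [hrep, Finset.sum_product]
  rw [aL_rep C v hrep', aL_rep C v (hD a), sum_tmul, map_sum, Finset.sum_product]
  refine Finset.sum_congr rfl fun i _ => ?_
  rw [aL_rep C _ (hD b)]
  refine Finset.sum_congr rfl fun j _ => ?_
  dsimp only
  conv_rhs => rw [antimult C, C.massoc]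
  congr 1
  rw [C.massoc]
  congr 1
  rw [C.massoc]

/-- The classical Yetter–Drinfeld compatibility for the adjoint action and `Δ`. -/
theorem yd_core (w : H) {ι : Type} {g : H} {s : Finset ι} {f1 f2 : ι → H}
    (hg : C.de g = ∑ i ∈ s, f1 i ⊗ₜ[k] f2 i) :
    ∑ i ∈ s, (TensorProduct.map LinearMap.id (C.mu (f1 i))) (C.de (C.aL (w ⊗ₜ[k] f2 i)))
      = ∑ i ∈ s, (TensorProduct.map ((TensorProduct.curry C.aL).flip (f1 i))
          (C.mu.flip (f2 i))) (C.de w) := by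
  choose D hD using fun y : H => ex_rep (C.de y)
  set mL := TensorProduct.lift C.mu with hmL
  set Gr : (H × H) → (H ⊗[k] (H ⊗[k] H)) →ₗ[k] (H ⊗[k] H) := fun r =>
    (TensorProduct.map (mL ∘ₗ TensorProduct.map C.St (C.mu r.1)) (C.mu r.2)) ∘ₗ
      (TensorProduct.assoc k H H H).symm.toLinearMap with hGr
  have Gr_tmul : ∀ (r : H × H) (x1 x2 x3 : H),
      Gr r (x1 ⊗ₜ[k] (x2 ⊗ₜ[k] x3))
        = C.mu (C.St x1) (C.mu r.1 x2) ⊗ₜ[k] C.mu r.2 x3 := by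
    intro r x1 x2 x3; simp [hGr, hmL]
  set PhiR : (H × H) → (H ⊗[k] (H ⊗[k] (H ⊗[k] (H ⊗[k] H)))) →ₗ[k] (H ⊗[k] H) := fun r =>
    (LinearMap.lTensor H mL) ∘ₗ (TensorProduct.leftComm k H H H).toLinearMap ∘ₗ
      (TensorProduct.map (mL ∘ₗ LinearMap.lTensor H C.St) LinearMap.id) ∘ₗ
      (TensorProduct.assoc k H H (H ⊗[k] H)).symm.toLinearMap ∘ₗ
      (LinearMap.lTensor H (LinearMap.lTensor H (Gr r))) with hPhiR
  have PhiR_tmul : ∀ (r : H × H) (x1 x2 x3 x4 x5 : H),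
      PhiR r (x1 ⊗ₜ[k] (x2 ⊗ₜ[k] (x3 ⊗ₜ[k] (x4 ⊗ₜ[k] x5))))
        = C.mu (C.St x3) (C.mu r.1 x4) ⊗ₜ[k]
            C.mu (C.mu x1 (C.St x2)) (C.mu r.2 x5) := by
    intro r x1 x2 x3 x4 x5
    simp [hPhiR, Gr_tmul, hmL]
  -- Step 1 : LHS = ∑_r PhiR r (D4 g)
  have hD4a : C.D4 g = ∑ i ∈ s, ∑ l ∈ D (f2 i), ∑ m ∈ D l.1,
      f1 i ⊗ₜ[k] (m.1 ⊗ₜ[k] (m.2 ⊗ₜ[k] C.de l.2)) := by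
    rw [D4_rep C hg]
    refine Finset.sum_congr rfl fun i _ => ?_
    rw [D3_rep' C (hD (f2 i)) (fun l _ => hD l.1)]
    rw [tmul_sum]
    exact Finset.sum_congr rfl fun l _ => by rw [tmul_sum]
  have hdeal : ∀ l : H × H, C.de (C.mu (C.St l.1) (C.mu w l.2))
      = ∑ r ∈ D w, ∑ n ∈ D l.2, ∑ m ∈ D l.1,
          C.mu (C.St m.2) (C.mu r.1 n.1) ⊗ₜ[k] C.mu (C.St m.1) (C.mu r.2 n.2) := by
    intro l
    rw [C.de_mul, anticomult C, Gs_rep C (hD l.1), de_mul_rep C w l.2 hD]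
    simp only [map_sum, LinearMap.sum_apply, TensorProduct.map₂_apply_tmul, map_tmul]
  have step1 : ∑ i ∈ s, (TensorProduct.map LinearMap.id (C.mu (f1 i)))
        (C.de (C.aL (w ⊗ₜ[k] f2 i)))
      = ∑ r ∈ D w, PhiR r (C.D4 g) := by
    have expand : ∀ i ∈ s,
        (TensorProduct.map LinearMap.id (C.mu (f1 i))) (C.de (C.aL (w ⊗ₜ[k] f2 i)))
          = ∑ l ∈ D (f2 i), ∑ r ∈ D w, ∑ n ∈ D l.2, ∑ m ∈ D l.1,
              C.mu (C.St m.2) (C.mu r.1 n.1) ⊗ₜ[k]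
                C.mu (f1 i) (C.mu (C.St m.1) (C.mu r.2 n.2)) := by
      intro i _
      rw [aL_rep C w (hD (f2 i)), map_sum, map_sum]
      refine Finset.sum_congr rfl fun l _ => ?_
      rw [hdeal l]
      simp only [map_sum, map_tmul, LinearMap.id_coe, id_eq]
    rw [Finset.sum_congr rfl expand]
    have rhs : ∑ r ∈ D w, PhiR r (C.D4 g)
        = ∑ r ∈ D w, ∑ i ∈ s, ∑ l ∈ D (f2 i), ∑ m ∈ D l.1, ∑ n ∈ D l.2,
            C.mu (C.St m.2) (C.mu r.1 n.1) ⊗ₜ[k]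
              C.mu (C.mu (f1 i) (C.St m.1)) (C.mu r.2 n.2) := by
      refine Finset.sum_congr rfl fun r _ => ?_
      rw [hD4a]
      simp only [map_sum]
      refine Finset.sum_congr rfl fun i _ => Finset.sum_congr rfl fun l _ => ?_
      refine Finset.sum_congr rfl fun m _ => ?_
      rw [hD l.2, tmul_sum, tmul_sum, tmul_sum, map_sum]
      exact Finset.sum_congr rfl fun n _ => PhiR_tmul r _ _ _ _ _
    rw [rhs, Finset.sum_comm]
    refine Finset.sum_congr rfl fun i _ => ?_
    rw [Finset.sum_comm]
    refine Finset.sum_congr rfl fun l _ => ?_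
    refine Finset.sum_congr rfl fun r _ => ?_
    rw [Finset.sum_comm]
    refine Finset.sum_congr rfl fun n _ => Finset.sum_congr rfl fun m _ => ?_
    rw [C.massoc]
  -- Step 2 : collapse, ∑_r PhiR r (D4 g) = ∑_r Gr r (D2 g)
  have step2 : ∑ r ∈ D w, PhiR r (C.D4 g) = ∑ r ∈ D w, Gr r (C.D2 g) := by
    have hD4b : C.D4 g = ∑ i ∈ s, ∑ l ∈ D (f1 i),
        l.1 ⊗ₜ[k] (l.2 ⊗ₜ[k] C.D2 (f2 i)) :=
      D4_rep' C hg (fun i _ => hD (f1 i))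
    refine Finset.sum_congr rfl fun r _ => ?_
    rw [hD4b]
    simp only [map_sum]
    have hcol : ∀ i ∈ s, ∑ l ∈ D (f1 i), PhiR r (l.1 ⊗ₜ[k] (l.2 ⊗ₜ[k] C.D2 (f2 i)))
        = C.ep (f1 i) • Gr r (C.D2 (f2 i)) := by
      intro i _
      have hD2q : C.D2 (f2 i) = ∑ n ∈ D (f2 i), ∑ o ∈ D n.2,
          n.1 ⊗ₜ[k] (o.1 ⊗ₜ[k] o.2) := by
        rw [D2_rep C (hD (f2 i))]
        exact Finset.sum_congr rfl fun n _ => by rw [hD n.2, tmul_sum]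
      have hper : ∀ l : H × H, PhiR r (l.1 ⊗ₜ[k] (l.2 ⊗ₜ[k] C.D2 (f2 i)))
          = ∑ n ∈ D (f2 i), ∑ o ∈ D n.2,
              C.mu (C.St n.1) (C.mu r.1 o.1) ⊗ₜ[k]
                C.mu (C.mu l.1 (C.St l.2)) (C.mu r.2 o.2) := by
        intro l
        rw [hD2q, tmul_sum, tmul_sum, map_sum]
        refine Finset.sum_congr rfl fun n _ => ?_
        rw [tmul_sum, tmul_sum, map_sum]
        exact Finset.sum_congr rfl fun o _ => PhiR_tmul r _ _ _ _ _
      have hGrval : Gr r (C.D2 (f2 i)) = ∑ n ∈ D (f2 i), ∑ o ∈ D n.2,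
          C.mu (C.St n.1) (C.mu r.1 o.1) ⊗ₜ[k] C.mu r.2 o.2 := by
        rw [hD2q, map_sum]
        refine Finset.sum_congr rfl fun n _ => ?_
        rw [map_sum]
        exact Finset.sum_congr rfl fun o _ => Gr_tmul r _ _ _
      simp only [hper]
      rw [Finset.sum_comm, hGrval, Finset.smul_sum]
      refine Finset.sum_congr rfl fun n _ => ?_
      rw [Finset.sum_comm, Finset.smul_sum]
      refine Finset.sum_congr rfl fun o _ => ?_
      rw [← tmul_sum]
      have h6 : ∑ l ∈ D (f1 i), C.mu (C.mu l.1 (C.St l.2)) (C.mu r.2 o.2)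
          = C.mu (C.ep (f1 i) • C.un) (C.mu r.2 o.2) := by
        rw [← anti_r_rep C (hD (f1 i)), map_sum, LinearMap.sum_apply]
      rw [h6, map_smul, LinearMap.smul_apply, C.mone, tmul_smul]
    rw [Finset.sum_congr rfl hcol]
    have hlin : ∑ i ∈ s, C.ep (f1 i) • Gr r (C.D2 (f2 i))
        = Gr r (C.D2 (∑ i ∈ s, C.ep (f1 i) • f2 i)) := by
      simp only [map_sum, map_smul]
    rw [hlin, counit_l_rep C hg]
  -- Step 3 : RHS = ∑_r Gr r (D2 g)
  have step3 : ∑ i ∈ s, (TensorProduct.map ((TensorProduct.curry C.aL).flip (f1 i))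
        (C.mu.flip (f2 i))) (C.de w)
      = ∑ r ∈ D w, Gr r (C.D2 g) := by
    have hD2g : C.D2 g = ∑ i ∈ s, ∑ l ∈ D (f1 i),
        l.1 ⊗ₜ[k] (l.2 ⊗ₜ[k] f2 i) := D2_rep' C hg (fun i _ => hD (f1 i))
    have rhs2 : ∑ r ∈ D w, Gr r (C.D2 g)
        = ∑ r ∈ D w, ∑ i ∈ s, ∑ l ∈ D (f1 i),
            C.mu (C.St l.1) (C.mu r.1 l.2) ⊗ₜ[k] C.mu r.2 (f2 i) := by
      refine Finset.sum_congr rfl fun r _ => ?_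
      rw [hD2g]
      simp only [map_sum]
      exact Finset.sum_congr rfl fun i _ => Finset.sum_congr rfl fun l _ => Gr_tmul r _ _ _
    rw [rhs2, Finset.sum_comm]
    refine Finset.sum_congr rfl fun i _ => ?_
    rw [hD w, map_sum]
    refine Finset.sum_congr rfl fun r _ => ?_
    rw [map_tmul]
    have hflip : ((TensorProduct.curry C.aL).flip (f1 i)) r.1 = C.aL (r.1 ⊗ₜ[k] f1 i) := rfl
    rw [hflip, aL_rep C r.1 (hD (f1 i)), sum_tmul]
    rfl
  rw [step1, step2, ← step3]
section HomSide
variable {k : Type} [Field k] {H : Type} [AddCommGroup H] [Module k H]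
variable (A : HomHopf.Hopf k H) (βe : H ≃ₗ[k] H) (hβ : βe.toLinearMap = A.bmap)
include hβ

theorem hbi (x : H) : A.bmap (βe.symm x) = x := by
  rw [← hβ]; exact βe.apply_symm_apply x

theorem hib (x : H) : βe.symm (A.bmap x) = x := by
  rw [← hβ]; exact βe.symm_apply_apply x

theorem ib_mul (x y : H) :
    βe.symm (A.mul x y) = A.mul (βe.symm x) (βe.symm y) := by
  have h := A.bmap_mul (βe.symm x) (βe.symm y)
  rw [hbi A βe hβ, hbi A βe hβ] at h
  rw [← h, hib A βe hβ]

theorem ib_one : βe.symm A.one = A.one := by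
  have := A.bmap_one
  rw [← this, hib A βe hβ, this]

theorem ib_S (x : H) : βe.symm (A.S x) = A.S (βe.symm x) := by
  have h := A.S_bmap (βe.symm x)
  rw [hbi A βe hβ] at h
  rw [h, hib A βe hβ]

theorem ib_counit (x : H) : A.counit (βe.symm x) = A.counit x := by
  have h := A.counit_bmap (βe.symm x)
  rw [hbi A βe hβ] at h
  exact h.symm

theorem comul_ib (x : H) :
    A.comul (βe.symm x) = TensorProduct.map βe.symm.toLinearMap βe.symm.toLinearMap
      (A.comul x) := by
  have h := A.comul_bmap (βe.symm x)
  rw [hbi A βe hβ] at h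
  rw [h, ← LinearMap.comp_apply, ← TensorProduct.map_comp]
  have hid : βe.symm.toLinearMap ∘ₗ A.bmap = LinearMap.id := by
    ext z; exact hib A βe hβ z
  rw [hid, TensorProduct.map_id, LinearMap.id_apply]

/-- the untwisted classical Hopf algebra attached to a Hom-Hopf algebra -/
noncomputable def mkCH : CH k H where
  mu := A.mul.compr₂ βe.symm.toLinearMap
  de := A.comul ∘ₗ βe.symm.toLinearMap
  ep := A.counit
  un := A.one
  St := A.S
  massoc := by
    intro a b c
    simp only [LinearMap.compr₂_apply, LinearMap.comp_apply, LinearEquiv.coe_coe]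
    congr 1
    rw [ib_mul A βe hβ]
    have h1 : A.mul a b = A.mul (A.bmap (βe.symm a)) b := by rw [hbi A βe hβ]
    have hc : (c : H) = A.bmap (βe.symm c) := (hbi A βe hβ c).symm
    calc A.mul (A.mul (βe.symm a) (βe.symm b)) c
        = A.mul (A.mul (βe.symm a) (βe.symm b)) (A.bmap (βe.symm c)) := by rw [hbi A βe hβ]
      _ = A.mul (A.bmap (βe.symm a)) (A.mul (βe.symm b) (βe.symm c)) := (A.hom_assoc _ _ _).symm
      _ = A.mul a (A.mul (βe.symm b) (βe.symm c)) := by rw [hbi A βe hβ]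
      _ = A.mul a (βe.symm (A.mul b c)) := by rw [ib_mul A βe hβ]
  mone := by
    intro a
    simp only [LinearMap.compr₂_apply, LinearMap.comp_apply, LinearEquiv.coe_coe]
    rw [A.one_mul, hib A βe hβ]
  onem := by
    intro a
    simp only [LinearMap.compr₂_apply, LinearMap.comp_apply, LinearEquiv.coe_coe]
    rw [A.mul_one, hib A βe hβ]
  coassoc := by
    intro x
    obtain ⟨s, hs⟩ := TensorProduct.exists_finset (A.comul (βe.symm (βe.symm x)))
    have hde : A.comul (βe.symm x)
        = ∑ i ∈ s, A.bmap i.1 ⊗ₜ[k] A.bmap i.2 := by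
      have : A.comul (βe.symm x) = A.comul (A.bmap (βe.symm (βe.symm x))) := by
        rw [hbi A βe hβ]
      rw [this, A.comul_bmap, hs]
      simp [map_sum]
    have hco := A.coassoc (βe.symm (βe.symm x))
    rw [hs] at hco
    simp only [map_sum, TensorProduct.map_tmul, LinearMap.id_coe, id_eq] at hco ⊢
    simp only [LinearMap.comp_apply, LinearEquiv.coe_coe, hde, map_sum,
      LinearMap.lTensor_tmul, LinearMap.rTensor_tmul, LinearMap.comp_apply,
      LinearEquiv.coe_coe, hib A βe hβ]
    exact hco
  counit_l := by
    intro x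
    have h := A.counit_comul (βe.symm x)
    have : (LinearMap.rTensor H A.counit) (A.comul (βe.symm x))
        = TensorProduct.map A.counit LinearMap.id (A.comul (βe.symm x)) := rfl
    simp only [LinearMap.comp_apply, LinearEquiv.coe_coe, this, h, hbi A βe hβ]
  counit_r := by
    intro x
    have h := A.comul_counit (βe.symm x)
    have : (LinearMap.lTensor H A.counit) (A.comul (βe.symm x))
        = TensorProduct.map LinearMap.id A.counit (A.comul (βe.symm x)) := rfl
    simp only [LinearMap.comp_apply, LinearEquiv.coe_coe, this, h, hbi A βe hβ]
  anti_l := by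
    intro x
    obtain ⟨s, hs⟩ := TensorProduct.exists_finset (A.comul (βe.symm x))
    have h := A.S_mul_id (βe.symm x)
    rw [hs] at h
    simp only [map_sum, TensorProduct.map_tmul, TensorProduct.lift.tmul,
      LinearMap.id_coe, id_eq] at h
    simp only [LinearMap.comp_apply, LinearEquiv.coe_coe, hs, map_sum,
      LinearMap.rTensor_tmul, TensorProduct.lift.tmul, LinearMap.compr₂_apply,
      ib_counit A βe hβ] at h ⊢
    rw [← map_sum, h, map_smul, ib_one A βe hβ]
  anti_r := by
    intro x
    obtain ⟨s, hs⟩ := TensorProduct.exists_finset (A.comul (βe.symm x))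
    have h := A.id_mul_S (βe.symm x)
    rw [hs] at h
    simp only [map_sum, TensorProduct.map_tmul, TensorProduct.lift.tmul,
      LinearMap.id_coe, id_eq] at h
    simp only [LinearMap.comp_apply, LinearEquiv.coe_coe, hs, map_sum,
      LinearMap.lTensor_tmul, TensorProduct.lift.tmul, LinearMap.compr₂_apply,
      ib_counit A βe hβ] at h ⊢
    rw [← map_sum, h, map_smul, ib_one A βe hβ]
  de_mul := by
    intro a b
    obtain ⟨sa, ha⟩ := TensorProduct.exists_finset (A.comul (βe.symm a))
    obtain ⟨sb, hb⟩ := TensorProduct.exists_finset (A.comul (βe.symm b))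
    have ka : A.comul (βe.symm (βe.symm a))
        = ∑ i ∈ sa, βe.symm i.1 ⊗ₜ[k] βe.symm i.2 := by
      rw [comul_ib A βe hβ (βe.symm a), ha]
      simp [map_sum]
    have kb : A.comul (βe.symm (βe.symm b))
        = ∑ i ∈ sb, βe.symm i.1 ⊗ₜ[k] βe.symm i.2 := by
      rw [comul_ib A βe hβ (βe.symm b), hb]
      simp [map_sum]
    have key : A.comul (βe.symm (βe.symm (A.mul a b)))
        = ∑ i ∈ sa, ∑ j ∈ sb,
            A.mul (βe.symm i.1) (βe.symm j.1) ⊗ₜ[k] A.mul (βe.symm i.2) (βe.symm j.2) := by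
      have : βe.symm (βe.symm (A.mul a b))
          = A.mul (βe.symm (βe.symm a)) (βe.symm (βe.symm b)) := by
        rw [ib_mul A βe hβ, ib_mul A βe hβ]
      rw [this, A.comul_mul, ka, kb]
      simp only [map_sum, LinearMap.sum_apply, TensorProduct.map₂_apply_tmul,
        TensorProduct.map_tmul, tmul_sum, sum_tmul]
      rw [Finset.sum_comm]
    simp only [LinearMap.comp_apply, LinearEquiv.coe_coe, LinearMap.compr₂_apply]
    rw [key, ha, hb]
    simp only [map_sum, LinearMap.sum_apply, TensorProduct.map₂_apply_tmul,
      TensorProduct.map_tmul, LinearMap.compr₂_apply, LinearEquiv.coe_coe]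
    rw [Finset.sum_comm]
    refine Finset.sum_congr rfl fun i _ => Finset.sum_congr rfl fun j _ => ?_
    rw [ib_mul A βe hβ, ib_mul A βe hβ]
  de_un := by
    simp only [LinearMap.comp_apply, LinearEquiv.coe_coe, ib_one A βe hβ, A.comul_one]
  ep_mul := by
    intro a b
    simp only [LinearMap.compr₂_apply, LinearEquiv.coe_coe, ib_counit A βe hβ,
      A.counit_mul]
  ep_un := A.counit_one

end HomSide
section Transfer
variable {k : Type} [Field k] {H : Type} [AddCommGroup H] [Module k H]
variable (A : HomHopf.Hopf k H) (βe : H ≃ₗ[k] H) (hβ : βe.toLinearMap = A.bmap)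
include hβ

theorem de_of_b (h : H) : (mkCH A βe hβ).de (A.bmap h) = A.comul h := by
  show A.comul (βe.symm (A.bmap h)) = A.comul h
  rw [hib A βe hβ]

theorem de_eq (h : H) : (mkCH A βe hβ).de h
    = TensorProduct.map βe.symm.toLinearMap βe.symm.toLinearMap (A.comul h) :=
  comul_ib A βe hβ h

theorem mu_apply (x y : H) : (mkCH A βe hβ).mu x y = βe.symm (A.mul x y) := rfl

theorem b_mu (x y : H) : A.bmap ((mkCH A βe hβ).mu x y) = A.mul x y := by
  rw [mu_apply A βe hβ, hbi A βe hβ]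

theorem de_rep {ι : Type} {h : H} {s : Finset ι} {f g : ι → H}
    (hs : A.comul h = ∑ i ∈ s, f i ⊗ₜ[k] g i) :
    (mkCH A βe hβ).de h = ∑ i ∈ s, βe.symm (f i) ⊗ₜ[k] βe.symm (g i) := by
  rw [de_eq A βe hβ, hs, map_sum]
  simp

theorem aL_bmap (v h : H) :
    (mkCH A βe hβ).aL (A.bmap v ⊗ₜ[k] A.bmap h)
      = A.bmap ((mkCH A βe hβ).aL (v ⊗ₜ[k] h)) := by
  obtain ⟨s, hs⟩ := TensorProduct.exists_finset (A.comul h)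
  have h1 : (mkCH A βe hβ).de (A.bmap h) = ∑ i ∈ s, i.1 ⊗ₜ[k] i.2 := by
    rw [de_of_b A βe hβ, hs]
  have h2 := de_rep A βe hβ hs
  rw [aL_rep _ _ h1, aL_rep _ _ h2, map_sum]
  refine Finset.sum_congr rfl fun i _ => ?_
  show (mkCH A βe hβ).mu (A.S i.1) ((mkCH A βe hβ).mu (A.bmap v) i.2)
      = A.bmap ((mkCH A βe hβ).mu (A.S (βe.symm i.1))
          ((mkCH A βe hβ).mu v (βe.symm i.2)))
  rw [mu_apply A βe hβ, mu_apply A βe hβ, b_mu A βe hβ, mu_apply A βe hβ,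
    ib_mul A βe hβ (A.bmap v) i.2, hib A βe hβ, ← ib_S A βe hβ,
    ← ib_mul A βe hβ]

theorem ract_eq (v h : H) :
    (TensorProduct.curry
        ((TensorProduct.lift A.mul).comp
          ((TensorProduct.map (A.S.comp βe.symm.toLinearMap)
              ((TensorProduct.lift A.mul).comp
                (TensorProduct.map βe.symm.toLinearMap
                  (βe.symm.toLinearMap.comp βe.symm.toLinearMap)))).comp
            ((TensorProduct.leftComm k H H H).toLinearMap.comp
              (TensorProduct.map LinearMap.id A.comul))))) v h
      = A.bmap ((mkCH A βe hβ).aL (v ⊗ₜ[k] h)) := by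
  obtain ⟨s, hs⟩ := TensorProduct.exists_finset (A.comul h)
  have h2 := de_rep A βe hβ hs
  rw [TensorProduct.curry_apply]
  simp only [LinearMap.comp_apply, TensorProduct.map_tmul, LinearMap.id_coe, id_eq]
  rw [hs, tmul_sum]
  simp only [map_sum, TensorProduct.leftComm_tmul, TensorProduct.map_tmul,
    TensorProduct.lift.tmul, LinearMap.comp_apply, LinearEquiv.coe_coe]
  rw [aL_rep _ _ h2, map_sum]
  refine Finset.sum_congr rfl fun i _ => ?_
  show A.mul (A.S (βe.symm i.1)) (A.mul (βe.symm v) (βe.symm (βe.symm i.2)))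
      = A.bmap ((mkCH A βe hβ).mu (A.S (βe.symm i.1))
          ((mkCH A βe hβ).mu v (βe.symm i.2)))
  rw [b_mu A βe hβ, mu_apply A βe hβ, ib_mul A βe hβ v (βe.symm i.2)]

theorem act_one_aux (v : H) : (mkCH A βe hβ).aL (v ⊗ₜ[k] A.one) = v := by
  have hrep : (mkCH A βe hβ).de A.one
      = ∑ i ∈ ({(A.one, A.one)} : Finset (H × H)), i.1 ⊗ₜ[k] i.2 := by
    rw [Finset.sum_singleton]
    exact (mkCH A βe hβ).de_un
  rw [aL_rep _ _ hrep, Finset.sum_singleton]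
  have h1 := S_un (mkCH A βe hβ)
  show (mkCH A βe hβ).mu ((mkCH A βe hβ).St (mkCH A βe hβ).un)
      ((mkCH A βe hβ).mu v (mkCH A βe hβ).un) = v
  rw [h1, (mkCH A βe hβ).mone, (mkCH A βe hβ).onem]

end Transfer
end HomHopfAux
namespace HomHopf
open TensorProduct
variable (k : Type) [Field k]

/-- `H` is a right-right Yetter–Drinfel'd module over itself with coaction `Δ`
and action `x ◁ h = Sβ⁻¹(h_1)(β⁻¹(x)β⁻²(h_2))`. -/
theorem self_yd_adjoint (H : Type) [AddCommGroup H] [Module k H]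
    (A : Hopf k H) (βe : H ≃ₗ[k] H) (hβ : βe.toLinearMap = A.bmap) :
    IsYD k A A.bmap
      (TensorProduct.curry
        ((TensorProduct.lift A.mul).comp
          ((TensorProduct.map (A.S.comp βe.symm.toLinearMap)
              ((TensorProduct.lift A.mul).comp
                (TensorProduct.map βe.symm.toLinearMap
                  (βe.symm.toLinearMap.comp βe.symm.toLinearMap)))).comp
            ((TensorProduct.leftComm k H H H).toLinearMap.comp
              (TensorProduct.map LinearMap.id A.comul)))))
      A.comul := by
  classical
  set R : H →ₗ[k] H →ₗ[k] H :=
    (TensorProduct.curry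
        ((TensorProduct.lift A.mul).comp
          ((TensorProduct.map (A.S.comp βe.symm.toLinearMap)
              ((TensorProduct.lift A.mul).comp
                (TensorProduct.map βe.symm.toLinearMap
                  (βe.symm.toLinearMap.comp βe.symm.toLinearMap)))).comp
            ((TensorProduct.leftComm k H H H).toLinearMap.comp
              (TensorProduct.map LinearMap.id A.comul))))) with hRdef
  have hR1 : ∀ v h : H, R v h
      = A.bmap ((HomHopfAux.mkCH A βe hβ).aL (v ⊗ₜ[k] h)) := by
    intro v h
    rw [hRdef]
    exact HomHopfAux.ract_eq A βe hβ v h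
  refine ⟨⟨?_, ?_, ?_⟩, ⟨?_, ?_, ?_⟩, ?_⟩
  · -- module associativity
    intro m a b
    simp only [hR1]
    rw [HomHopfAux.aL_bmap A βe hβ,
      show A.mul a b = A.bmap ((HomHopfAux.mkCH A βe hβ).mu a b) from
        (HomHopfAux.b_mu A βe hβ a b).symm,
      HomHopfAux.aL_bmap A βe hβ, HomHopfAux.adj_assoc]
  · -- zeta_act
    intro m a
    simp only [hR1]
    rw [HomHopfAux.aL_bmap A βe hβ]
  · -- act_one
    intro m
    simp only [hR1]
    rw [show (A.toBialg).one = A.one from rfl, HomHopfAux.act_one_aux A βe hβ]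
  · -- coact_zeta
    intro m
    exact A.comul_bmap m
  · -- coact_counit
    intro m
    exact A.comul_counit m
  · -- coassoc (comodule form)
    intro m
    rw [show (A.toBialg).comul = A.comul from rfl, A.coassoc m,
      LinearEquiv.symm_apply_apply]
  · -- Yetter–Drinfeld compatibility
    intro v h ι s h1 h2 hrep
    have hg : (HomHopfAux.mkCH A βe hβ).de (A.bmap (A.bmap h))
        = ∑ i ∈ s, A.bmap (h1 i) ⊗ₜ[k] A.bmap (h2 i) := by
      rw [HomHopfAux.de_of_b A βe hβ, A.comul_bmap, hrep, map_sum]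
      simp
    have core := HomHopfAux.yd_core (HomHopfAux.mkCH A βe hβ) (A.bmap v) hg
    have TL : ∀ i ∈ s,
        (TensorProduct.map LinearMap.id (A.mul (A.bmap (A.bmap (h1 i)))))
            (A.comul (R v (h2 i)))
          = (TensorProduct.map A.bmap (A.bmap ∘ₗ A.bmap))
              ((TensorProduct.map LinearMap.id
                  ((HomHopfAux.mkCH A βe hβ).mu (A.bmap (h1 i))))
                ((HomHopfAux.mkCH A βe hβ).de
                  ((HomHopfAux.mkCH A βe hβ).aL (A.bmap v ⊗ₜ[k] A.bmap (h2 i))))) := by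
      intro i _
      have hw : (HomHopfAux.mkCH A βe hβ).aL (A.bmap v ⊗ₜ[k] A.bmap (h2 i))
          = R v (h2 i) := by
        rw [hR1 v (h2 i)]
        exact HomHopfAux.aL_bmap A βe hβ v (h2 i)
      rw [hw, HomHopfAux.de_eq A βe hβ]
      obtain ⟨t, ht⟩ := TensorProduct.exists_finset (A.comul (R v (h2 i)))
      rw [ht, map_sum, map_sum, map_sum, map_sum]
      refine Finset.sum_congr rfl fun t' _ => ?_
      simp only [TensorProduct.map_tmul, LinearMap.id_coe, id_eq, LinearMap.comp_apply,
        LinearEquiv.coe_coe, HomHopfAux.mu_apply A βe hβ, HomHopfAux.hbi A βe hβ]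
      rw [A.bmap_mul, HomHopfAux.hbi A βe hβ]
    have TR : ∀ i ∈ s,
        (TensorProduct.map (R.flip (A.bmap (h1 i)))
            ((A.mul.flip (A.bmap (A.bmap (h2 i)))).comp A.bmap)) (A.comul v)
          = (TensorProduct.map A.bmap (A.bmap ∘ₗ A.bmap))
              ((TensorProduct.map
                  ((TensorProduct.curry (HomHopfAux.mkCH A βe hβ).aL).flip (A.bmap (h1 i)))
                  ((HomHopfAux.mkCH A βe hβ).mu.flip (A.bmap (h2 i))))
                ((HomHopfAux.mkCH A βe hβ).de (A.bmap v))) := by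
      intro i _
      rw [HomHopfAux.de_of_b A βe hβ]
      obtain ⟨u, hu⟩ := TensorProduct.exists_finset (A.comul v)
      rw [hu, map_sum, map_sum, map_sum]
      refine Finset.sum_congr rfl fun u' _ => ?_
      simp only [TensorProduct.map_tmul, LinearMap.flip_apply, LinearMap.comp_apply,
        TensorProduct.curry_apply, HomHopfAux.mu_apply A βe hβ]
      rw [hR1, HomHopfAux.hbi A βe hβ, A.bmap_mul]
    rw [Finset.sum_congr rfl TL, Finset.sum_congr rfl TR, ← map_sum, ← map_sum, core]

end HomHopf
end

section
/- Let (H, β) be a Hom-Hopf algebra and (V, ζ_V), (W, ζ_W) right-right Yetter-Drinfel'd modules over H. Then V ⊗ W is a right-right Yetter-Drinfel'd module with action (v ⊗ w) ◁ h = v ◁ β^{-1}(h_1) ⊗ w ◁ β^{-1}(h_2) and coaction ρ(v ⊗ w) = v_{(0)} ⊗ w_{(0)} ⊗ β^{-1}(v_{(1)}w_{(1)}), with structure map ζ_V ⊗ ζ_W. -/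
open TensorProduct

namespace HomHopf

variable (k : Type) [Field k]

variable {H : Type} [AddCommGroup H] [Module k H]
variable {M N P V W U : Type}
  [AddCommGroup M] [Module k M] [AddCommGroup N] [Module k N]
  [AddCommGroup P] [Module k P] [AddCommGroup V] [Module k V]
  [AddCommGroup W] [Module k W] [AddCommGroup U] [Module k U]

section Aux

variable {k}

lemma bβ {A : Bialg k H} {βe : H ≃ₗ[k] H} (hβ : βe.toLinearMap = A.bmap) (h : H) :
    A.bmap (βe.symm h) = h := by
  rw [← hβ]; exact βe.apply_symm_apply h

lemma βb {A : Bialg k H} {βe : H ≃ₗ[k] H} (hβ : βe.toLinearMap = A.bmap) (h : H) :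
    βe.symm (A.bmap h) = h := by
  rw [← hβ]; exact βe.symm_apply_apply h

lemma bi_mul {A : Bialg k H} {βe : H ≃ₗ[k] H} (hβ : βe.toLinearMap = A.bmap) (a b : H) :
    βe.symm (A.mul a b) = A.mul (βe.symm a) (βe.symm b) := by
  have h1 := A.bmap_mul (βe.symm a) (βe.symm b)
  rw [bβ hβ, bβ hβ] at h1
  rw [← h1, βb hβ]

lemma bi_one {A : Bialg k H} {βe : H ≃ₗ[k] H} (hβ : βe.toLinearMap = A.bmap) :
    βe.symm A.one = A.one := by
  conv_lhs => rw [← A.bmap_one, βb hβ]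

lemma counit_bi {A : Bialg k H} {βe : H ≃ₗ[k] H} (hβ : βe.toLinearMap = A.bmap) (h : H) :
    A.counit (βe.symm h) = A.counit h := by
  conv_rhs => rw [← bβ hβ h, A.counit_bmap]

lemma map_bi_b {A : Bialg k H} {βe : H ≃ₗ[k] H} (hβ : βe.toLinearMap = A.bmap) (x : H ⊗[k] H) :
    TensorProduct.map βe.symm.toLinearMap βe.symm.toLinearMap
      (TensorProduct.map A.bmap A.bmap x) = x := by
  rw [← LinearMap.comp_apply, ← TensorProduct.map_comp]
  have : βe.symm.toLinearMap ∘ₗ A.bmap = LinearMap.id := by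
    ext h; exact βb hβ h
  rw [this, TensorProduct.map_id, LinearMap.id_apply]

lemma map_b_bi {A : Bialg k H} {βe : H ≃ₗ[k] H} (hβ : βe.toLinearMap = A.bmap) (x : H ⊗[k] H) :
    TensorProduct.map A.bmap A.bmap
      (TensorProduct.map βe.symm.toLinearMap βe.symm.toLinearMap x) = x := by
  rw [← LinearMap.comp_apply, ← TensorProduct.map_comp]
  have : A.bmap ∘ₗ βe.symm.toLinearMap = LinearMap.id := by
    ext h; exact bβ hβ h
  rw [this, TensorProduct.map_id, LinearMap.id_apply]

lemma comul_bi {A : Bialg k H} {βe : H ≃ₗ[k] H} (hβ : βe.toLinearMap = A.bmap) (h : H) :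
    A.comul (βe.symm h) =
      TensorProduct.map βe.symm.toLinearMap βe.symm.toLinearMap (A.comul h) := by
  have h1 := A.comul_bmap (βe.symm h)
  rw [bβ hβ] at h1
  rw [h1, map_bi_b hβ]

end Aux
section Aux2

variable {k}

lemma ydAct_apply (A : Bialg k H) (βi : H →ₗ[k] H)
    (rV : V →ₗ[k] H →ₗ[k] V) (rW : W →ₗ[k] H →ₗ[k] W) (x : V ⊗[k] W) (h : H) :
    ydAct k A βi rV rW x h
      = TensorProduct.map₂ rV rW x (TensorProduct.map βi βi (A.comul h)) := rfl

lemma ydAct_tmul (A : Bialg k H) (βi : H →ₗ[k] H)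
    (rV : V →ₗ[k] H →ₗ[k] V) (rW : W →ₗ[k] H →ₗ[k] W) (v : V) (w : W) (h : H) :
    ydAct k A βi rV rW (v ⊗ₜ[k] w) h
      = TensorProduct.map (rV v) (rW w) (TensorProduct.map βi βi (A.comul h)) := by
  rw [ydAct_apply, TensorProduct.map₂_apply_tmul]

/-- The bilinear assembly map for the coaction. -/
noncomputable def Cl (A : Bialg k H) (βi : H →ₗ[k] H) :
    (V ⊗[k] H) ⊗[k] (W ⊗[k] H) →ₗ[k] (V ⊗[k] W) ⊗[k] H :=
  (TensorProduct.map LinearMap.id (βi ∘ₗ TensorProduct.lift A.mul)) ∘ₗ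
    (TensorProduct.tensorTensorTensorComm k V H W H).toLinearMap

@[simp] lemma Cl_tmul (A : Bialg k H) (βi : H →ₗ[k] H)
    (v : V) (a : H) (w : W) (b : H) :
    Cl A βi ((v ⊗ₜ[k] a) ⊗ₜ[k] (w ⊗ₜ[k] b)) = (v ⊗ₜ[k] w) ⊗ₜ[k] (βi (A.mul a b)) := by
  simp [Cl]

lemma ydCoact_apply (A : Bialg k H) (βi : H →ₗ[k] H)
    (ρV : V →ₗ[k] V ⊗[k] H) (ρW : W →ₗ[k] W ⊗[k] H) (x : V ⊗[k] W) :
    ydCoact k A βi ρV ρW x = Cl A βi (TensorProduct.map ρV ρW x) := rfl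

lemma ydCoact_tmul (A : Bialg k H) (βi : H →ₗ[k] H)
    (ρV : V →ₗ[k] V ⊗[k] H) (ρW : W →ₗ[k] W ⊗[k] H) (v : V) (w : W) :
    ydCoact k A βi ρV ρW (v ⊗ₜ[k] w) = Cl A βi (ρV v ⊗ₜ[k] ρW w) := by
  rw [ydCoact_apply, TensorProduct.map_tmul]

lemma tensor_rmod {A : Hopf k H} {βe : H ≃ₗ[k] H} (hβ : βe.toLinearMap = A.bmap)
    {ζV : V →ₗ[k] V} {ractV : V →ₗ[k] H →ₗ[k] V} (hVm : IsRMod k A.toBialg ζV ractV)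
    {ζW : W →ₗ[k] W} {ractW : W →ₗ[k] H →ₗ[k] W} (hWm : IsRMod k A.toBialg ζW ractW) :
    IsRMod k A.toBialg (TensorProduct.map ζV ζW)
      (ydAct k A.toBialg βe.symm.toLinearMap ractV ractW) := by
  constructor
  · -- assoc
    intro x a b
    induction x using TensorProduct.induction_on with
    | zero => simp [ydAct_apply]
    | add y z hy hz =>
      simp only [ydAct_apply, map_add, LinearMap.add_apply] at hy hz ⊢
      rw [hy, hz]
    | tmul v w =>
      rw [ydAct_tmul, ydAct_apply, TensorProduct.map_tmul, ydAct_tmul,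
        A.comul_bmap, map_bi_b hβ, A.comul_mul]
      generalize A.comul a = p
      generalize A.comul b = q
      induction p using TensorProduct.induction_on with
      | zero => simp
      | add p1 p2 h1 h2 =>
        simp only [map_add, LinearMap.add_apply, TensorProduct.map₂_apply_tmul,
          TensorProduct.add_tmul, TensorProduct.tmul_add] at h1 h2 ⊢
        rw [h1, h2]
      | tmul a1 a2 =>
        induction q using TensorProduct.induction_on with
        | zero => simp
        | add q1 q2 h1 h2 =>
          simp only [map_add, LinearMap.add_apply, TensorProduct.map₂_apply_tmul,
            TensorProduct.add_tmul, TensorProduct.tmul_add] at h1 h2 ⊢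
          rw [h1, h2]
        | tmul b1 b2 =>
          simp only [TensorProduct.map_tmul, TensorProduct.map₂_apply_tmul,
            LinearEquiv.coe_coe]
          rw [bi_mul hβ, bi_mul hβ, ← hVm.assoc, ← hWm.assoc, bβ hβ, bβ hβ]
  · -- zeta_act
    intro x a
    induction x using TensorProduct.induction_on with
    | zero => simp [ydAct_apply]
    | add y z hy hz =>
      simp only [ydAct_apply, map_add, LinearMap.add_apply] at hy hz ⊢
      rw [hy, hz]
    | tmul v w =>
      rw [ydAct_tmul, TensorProduct.map_tmul, ydAct_tmul, A.comul_bmap, map_bi_b hβ]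
      generalize A.comul a = p
      induction p using TensorProduct.induction_on with
      | zero => simp
      | add p1 p2 h1 h2 =>
        simp only [map_add, LinearMap.add_apply] at h1 h2 ⊢
        rw [h1, h2]
      | tmul a1 a2 =>
        simp only [TensorProduct.map_tmul, LinearEquiv.coe_coe]
        rw [hVm.zeta_act, hWm.zeta_act, bβ hβ, bβ hβ]
  · -- act_one
    intro x
    induction x using TensorProduct.induction_on with
    | zero => simp [ydAct_apply]
    | add y z hy hz =>
      simp only [ydAct_apply, map_add, LinearMap.add_apply] at hy hz ⊢
      rw [hy, hz]
    | tmul v w =>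
      rw [ydAct_tmul, A.comul_one, TensorProduct.map_tmul, TensorProduct.map_tmul,
        LinearEquiv.coe_coe, bi_one hβ, hVm.act_one, hWm.act_one, TensorProduct.map_tmul]

end Aux2
section Aux3

variable {k}

/-- An iterated assembly map. -/
noncomputable def Phi2 (A : Bialg k H) (βi : H →ₗ[k] H) :
    ((V ⊗[k] H) ⊗[k] H) ⊗[k] ((W ⊗[k] H) ⊗[k] H) →ₗ[k] ((V ⊗[k] W) ⊗[k] H) ⊗[k] H :=
  (TensorProduct.map (Cl A βi) (βi ∘ₗ TensorProduct.lift A.mul)) ∘ₗ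
    (TensorProduct.tensorTensorTensorComm k (V ⊗[k] H) H (W ⊗[k] H) H).toLinearMap

@[simp] lemma Phi2_tmul (A : Bialg k H) (βi : H →ₗ[k] H)
    (t : V ⊗[k] H) (b : H) (s : W ⊗[k] H) (d : H) :
    Phi2 A βi ((t ⊗ₜ[k] b) ⊗ₜ[k] (s ⊗ₜ[k] d))
      = Cl A βi (t ⊗ₜ[k] s) ⊗ₜ[k] (βi (A.mul b d)) := by
  simp [Phi2]

lemma tensor_rcom {A : Hopf k H} {βe : H ≃ₗ[k] H} (hβ : βe.toLinearMap = A.bmap)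
    {ζV : V →ₗ[k] V} {ρV : V →ₗ[k] V ⊗[k] H} (hVc : IsRCom k A.toBialg ζV ρV)
    {ζW : W →ₗ[k] W} {ρW : W →ₗ[k] W ⊗[k] H} (hWc : IsRCom k A.toBialg ζW ρW) :
    IsRCom k A.toBialg (TensorProduct.map ζV ζW)
      (ydCoact k A.toBialg βe.symm.toLinearMap ρV ρW) := by
  have key1 : ∀ (t : V ⊗[k] H) (s : W ⊗[k] H),
      Cl A.toBialg βe.symm.toLinearMap
        (TensorProduct.map ζV A.bmap t ⊗ₜ[k] TensorProduct.map ζW A.bmap s)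
      = TensorProduct.map (TensorProduct.map ζV ζW) A.bmap
          (Cl A.toBialg βe.symm.toLinearMap (t ⊗ₜ[k] s)) := by
    intro t s
    induction t using TensorProduct.induction_on with
    | zero => simp
    | add t1 t2 h1 h2 =>
      simp only [map_add, TensorProduct.add_tmul] at h1 h2 ⊢; rw [h1, h2]
    | tmul v0 v1 =>
      induction s using TensorProduct.induction_on with
      | zero => simp
      | add s1 s2 h1 h2 =>
        simp only [map_add, TensorProduct.tmul_add] at h1 h2 ⊢; rw [h1, h2]
      | tmul w0 w1 =>
        simp only [TensorProduct.map_tmul, Cl_tmul, LinearEquiv.coe_coe]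
        rw [← A.bmap_mul, βb hβ, bβ hβ]
  have key2 : ∀ (t : V ⊗[k] H) (s : W ⊗[k] H),
      TensorProduct.rid k (V ⊗[k] W) (TensorProduct.map LinearMap.id A.counit
        (Cl A.toBialg βe.symm.toLinearMap (t ⊗ₜ[k] s)))
      = TensorProduct.rid k V (TensorProduct.map LinearMap.id A.counit t)
          ⊗ₜ[k] TensorProduct.rid k W (TensorProduct.map LinearMap.id A.counit s) := by
    intro t s
    induction t using TensorProduct.induction_on with
    | zero => simp
    | add t1 t2 h1 h2 =>
      simp only [map_add, TensorProduct.add_tmul] at h1 h2 ⊢; rw [h1, h2]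
    | tmul v0 v1 =>
      induction s using TensorProduct.induction_on with
      | zero => simp
      | add s1 s2 h1 h2 =>
        simp only [map_add, TensorProduct.tmul_add] at h1 h2 ⊢; rw [h1, h2]
      | tmul w0 w1 =>
        simp only [TensorProduct.map_tmul, Cl_tmul, LinearMap.id_apply,
          TensorProduct.rid_tmul, LinearEquiv.coe_coe, counit_bi hβ, A.counit_mul,
          TensorProduct.smul_tmul', TensorProduct.tmul_smul, smul_smul, mul_comm]
  constructor
  · -- coact_zeta
    intro x
    induction x using TensorProduct.induction_on with
    | zero => simp
    | add y z hy hz => simp only [map_add] at hy hz ⊢; rw [hy, hz]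
    | tmul v w =>
      rw [TensorProduct.map_tmul, ydCoact_tmul, ydCoact_tmul,
        hVc.coact_zeta, hWc.coact_zeta, key1]
  · -- coact_counit
    intro x
    induction x using TensorProduct.induction_on with
    | zero => simp
    | add y z hy hz => simp only [map_add] at hy hz ⊢; rw [hy, hz]
    | tmul v w =>
      rw [ydCoact_tmul, key2, hVc.coact_counit, hWc.coact_counit, TensorProduct.map_tmul]
  · -- coassoc
    have key3 : ∀ (t : V ⊗[k] H) (s : W ⊗[k] H),
        TensorProduct.map (ydCoact k A.toBialg βe.symm.toLinearMap ρV ρW) A.bmap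
          (Cl A.toBialg βe.symm.toLinearMap (t ⊗ₜ[k] s))
        = Phi2 A.toBialg βe.symm.toLinearMap
            (TensorProduct.map ρV A.bmap t ⊗ₜ[k] TensorProduct.map ρW A.bmap s) := by
      intro t s
      induction t using TensorProduct.induction_on with
      | zero => simp
      | add t1 t2 h1 h2 =>
        simp only [map_add, TensorProduct.add_tmul] at h1 h2 ⊢; rw [h1, h2]
      | tmul v0 v1 =>
        induction s using TensorProduct.induction_on with
        | zero => simp
        | add s1 s2 h1 h2 =>
          simp only [map_add, TensorProduct.tmul_add] at h1 h2 ⊢; rw [h1, h2]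
        | tmul w0 w1 =>
          simp only [TensorProduct.map_tmul, Cl_tmul, Phi2_tmul, ydCoact_tmul,
            LinearEquiv.coe_coe]
          rw [← A.bmap_mul, βb hβ, bβ hβ]
    have key4 : ∀ (t : V ⊗[k] H) (s : W ⊗[k] H),
        (TensorProduct.assoc k (V ⊗[k] W) H H).symm
          (TensorProduct.map (TensorProduct.map ζV ζW) A.comul
            (Cl A.toBialg βe.symm.toLinearMap (t ⊗ₜ[k] s)))
        = Phi2 A.toBialg βe.symm.toLinearMap
            ((TensorProduct.assoc k V H H).symm (TensorProduct.map ζV A.comul t)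
              ⊗ₜ[k] (TensorProduct.assoc k W H H).symm
                (TensorProduct.map ζW A.comul s)) := by
      intro t s
      induction t using TensorProduct.induction_on with
      | zero => simp
      | add t1 t2 h1 h2 =>
        simp only [map_add, TensorProduct.add_tmul] at h1 h2 ⊢; rw [h1, h2]
      | tmul v0 v1 =>
        induction s using TensorProduct.induction_on with
        | zero => simp
        | add s1 s2 h1 h2 =>
          simp only [map_add, TensorProduct.tmul_add] at h1 h2 ⊢; rw [h1, h2]
        | tmul w0 w1 =>
          simp only [TensorProduct.map_tmul, Cl_tmul, LinearEquiv.coe_coe]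
          rw [comul_bi hβ, A.comul_mul]
          generalize A.comul v1 = p
          generalize A.comul w1 = q
          induction p using TensorProduct.induction_on with
          | zero => simp
          | add p1 p2 h1 h2 =>
            simp only [map_add, LinearMap.add_apply, TensorProduct.tmul_add,
              TensorProduct.add_tmul] at h1 h2 ⊢
            rw [h1, h2]
          | tmul a1 a2 =>
            induction q using TensorProduct.induction_on with
            | zero => simp
            | add q1 q2 h1 h2 =>
              simp only [map_add, LinearMap.add_apply, TensorProduct.tmul_add,
                TensorProduct.add_tmul] at h1 h2 ⊢
              rw [h1, h2]
            | tmul c1 c2 =>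
              simp only [TensorProduct.map₂_apply_tmul, TensorProduct.map_tmul,
                TensorProduct.assoc_symm_tmul, Phi2_tmul, Cl_tmul]
    intro x
    induction x using TensorProduct.induction_on with
    | zero => simp
    | add y z hy hz => simp only [map_add] at hy hz ⊢; rw [hy, hz]
    | tmul v w =>
      rw [ydCoact_tmul, key3, hVc.coassoc, hWc.coassoc, ← key4]

end Aux3
section Aux4

variable {k}

/-- Left side of the YD condition as a bilinear map in the two legs of `Δ h`. -/
noncomputable def Fb (A : Bialg k H) (ract : V →ₗ[k] H →ₗ[k] V)
    (ρ : V →ₗ[k] V ⊗[k] H) (v : V) : H →ₗ[k] H →ₗ[k] V ⊗[k] H :=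
  LinearMap.mk₂ k
    (fun a b => TensorProduct.map LinearMap.id (A.mul (A.bmap (A.bmap a)))
      (ρ (ract v b)))
    (fun a a' b => by
      simp only [map_add, TensorProduct.map_add_right, LinearMap.add_apply])
    (fun c a b => by
      simp only [map_smul, TensorProduct.map_smul_right, LinearMap.smul_apply])
    (fun a b b' => by simp only [map_add])
    (fun c a b => by simp only [map_smul])

/-- Right side of the YD condition as a bilinear map in the two legs of `Δ h`. -/
noncomputable def Gb (A : Bialg k H) (ract : V →ₗ[k] H →ₗ[k] V)
    (ρ : V →ₗ[k] V ⊗[k] H) (v : V) : H →ₗ[k] H →ₗ[k] V ⊗[k] H :=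
  LinearMap.mk₂ k
    (fun a b => TensorProduct.map (ract.flip (A.bmap a))
      (((A.mul.flip (A.bmap (A.bmap b))).comp A.bmap)) (ρ v))
    (fun a a' b => by
      simp only [map_add, TensorProduct.map_add_left, LinearMap.add_apply])
    (fun c a b => by
      simp only [map_smul, TensorProduct.map_smul_left, LinearMap.smul_apply])
    (fun a b b' => by
      simp only [map_add, LinearMap.add_comp, TensorProduct.map_add_right,
        LinearMap.add_apply])
    (fun c a b => by
      simp only [map_smul, LinearMap.smul_comp, TensorProduct.map_smul_right,
        LinearMap.smul_apply])

lemma ydCompat_of_lift {A : Bialg k H} {ract : V →ₗ[k] H →ₗ[k] V}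
    {ρ : V →ₗ[k] V ⊗[k] H}
    (hmain : ∀ (v : V) (h : H),
      TensorProduct.lift (Fb A ract ρ v) (A.comul h)
        = TensorProduct.lift (Gb A ract ρ v) (A.comul h)) :
    ydCompat k A ract ρ := by
  intro v h ι s h1 h2 hrep
  have := hmain v h
  rw [hrep, map_sum, map_sum] at this
  simpa [Fb, Gb] using this

lemma lift_of_ydCompat {A : Bialg k H} {ract : V →ₗ[k] H →ₗ[k] V}
    {ρ : V →ₗ[k] V ⊗[k] H} (hc : ydCompat k A ract ρ) (v : V) (h : H) :
    TensorProduct.lift (Fb A ract ρ v) (A.comul h)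
      = TensorProduct.lift (Gb A ract ρ v) (A.comul h) := by
  obtain ⟨s, hs⟩ := TensorProduct.exists_finset (A.comul h)
  have := hc v h (H × H) s Prod.fst Prod.snd hs
  rw [hs, map_sum, map_sum]
  simpa [Fb, Gb] using this

end Aux4
section Aux5

variable {k}

/-- Swap the two right-hand tensor factors. -/
noncomputable def swapP : (M ⊗[k] H) ⊗[k] H →ₗ[k] (M ⊗[k] H) ⊗[k] H :=
  (TensorProduct.assoc k M H H).symm.toLinearMap ∘ₗ
    (TensorProduct.map LinearMap.id (TensorProduct.comm k H H).toLinearMap) ∘ₗ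
      (TensorProduct.assoc k M H H).toLinearMap

@[simp] lemma swapP_tmul (m : M) (a b : H) :
    swapP ((m ⊗ₜ[k] a) ⊗ₜ[k] b) = (m ⊗ₜ[k] b) ⊗ₜ[k] a := by
  simp [swapP]

/-- Twisted left YD bilinear. -/
noncomputable def Ft (A : Bialg k H) (βe : H ≃ₗ[k] H)
    (ract : V →ₗ[k] H →ₗ[k] V) (ρ : V →ₗ[k] V ⊗[k] H) (v : V) :
    H →ₗ[k] H →ₗ[k] V ⊗[k] H :=
  LinearMap.mk₂ k
    (fun a b => TensorProduct.map LinearMap.id (A.mul (A.bmap a))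
      (ρ (ract v (βe.symm b))))
    (fun a a' b => by
      simp only [map_add, TensorProduct.map_add_right, LinearMap.add_apply])
    (fun c a b => by
      simp only [map_smul, TensorProduct.map_smul_right, LinearMap.smul_apply])
    (fun a b b' => by simp only [map_add])
    (fun c a b => by simp only [map_smul])

/-- Twisted right YD bilinear. -/
noncomputable def Gt (A : Bialg k H)
    (ract : V →ₗ[k] H →ₗ[k] V) (ρ : V →ₗ[k] V ⊗[k] H) (v : V) :
    H →ₗ[k] H →ₗ[k] V ⊗[k] H :=
  LinearMap.mk₂ k
    (fun a b => TensorProduct.map (ract.flip a)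
      ((A.mul.flip (A.bmap b)) ∘ₗ A.bmap) (ρ v))
    (fun a a' b => by
      simp only [map_add, TensorProduct.map_add_left, LinearMap.add_apply])
    (fun c a b => by
      simp only [map_smul, TensorProduct.map_smul_left, LinearMap.smul_apply])
    (fun a b b' => by
      simp only [map_add, LinearMap.add_comp, TensorProduct.map_add_right,
        LinearMap.add_apply])
    (fun c a b => by
      simp only [map_smul, LinearMap.smul_comp, TensorProduct.map_smul_right,
        LinearMap.smul_apply])

/-- Assembly with `β⁻¹` on the first H-leg. -/
noncomputable def Cl'' (A : Bialg k H) (βi : H →ₗ[k] H) :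
    (V ⊗[k] H) ⊗[k] (W ⊗[k] H) →ₗ[k] (V ⊗[k] W) ⊗[k] H :=
  (TensorProduct.map LinearMap.id (TensorProduct.lift A.mul ∘ₗ
      TensorProduct.map βi LinearMap.id)) ∘ₗ
    (TensorProduct.tensorTensorTensorComm k V H W H).toLinearMap

@[simp] lemma Cl''_tmul (A : Bialg k H) (βi : H →ₗ[k] H)
    (v : V) (a : H) (w : W) (b : H) :
    Cl'' A βi ((v ⊗ₜ[k] a) ⊗ₜ[k] (w ⊗ₜ[k] b))
      = (v ⊗ₜ[k] w) ⊗ₜ[k] (A.mul (βi a) b) := by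
  simp [Cl'']

/-- Plain multiplication assembly. -/
noncomputable def ClM (A : Bialg k H) :
    (V ⊗[k] H) ⊗[k] (W ⊗[k] H) →ₗ[k] (V ⊗[k] W) ⊗[k] H :=
  (TensorProduct.map LinearMap.id (TensorProduct.lift A.mul)) ∘ₗ
    (TensorProduct.tensorTensorTensorComm k V H W H).toLinearMap

@[simp] lemma ClM_tmul (A : Bialg k H) (v : V) (a : H) (w : W) (b : H) :
    ClM A ((v ⊗ₜ[k] a) ⊗ₜ[k] (w ⊗ₜ[k] b)) = (v ⊗ₜ[k] w) ⊗ₜ[k] (A.mul a b) := by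
  simp [ClM]

/-- First-stage linearization of the LHS of the YD condition. -/
noncomputable def Lam1 (A : Bialg k H) (βe : H ≃ₗ[k] H)
    (ractV : V →ₗ[k] H →ₗ[k] V) (ρV : V →ₗ[k] V ⊗[k] H)
    (ractW : W →ₗ[k] H →ₗ[k] W) (ρW : W →ₗ[k] W ⊗[k] H) (v : V) (w : W) :
    H ⊗[k] (H ⊗[k] H) →ₗ[k] (V ⊗[k] W) ⊗[k] H :=
  (TensorProduct.map LinearMap.id
      (TensorProduct.lift A.mul ∘ₗ
        TensorProduct.map (TensorProduct.lift A.mul) LinearMap.id ∘ₗ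
          (TensorProduct.assoc k H H H).symm.toLinearMap ∘ₗ
            TensorProduct.map LinearMap.id
              (TensorProduct.map βe.symm.toLinearMap LinearMap.id))) ∘ₗ
    (TensorProduct.leftComm k H (V ⊗[k] W) (H ⊗[k] H)).toLinearMap ∘ₗ
      (TensorProduct.map LinearMap.id
        ((TensorProduct.tensorTensorTensorComm k V H W H).toLinearMap ∘ₗ
          TensorProduct.map (ρV ∘ₗ (ractV v) ∘ₗ βe.symm.toLinearMap)
            (ρW ∘ₗ (ractW w) ∘ₗ βe.symm.toLinearMap)))

noncomputable def Lam2 (A : Bialg k H) (βe : H ≃ₗ[k] H)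
    (ractV : V →ₗ[k] H →ₗ[k] V) (ρV : V →ₗ[k] V ⊗[k] H)
    (ractW : W →ₗ[k] H →ₗ[k] W) (ρW : W →ₗ[k] W ⊗[k] H) (v : V) (w : W) :
    (H ⊗[k] H) ⊗[k] H →ₗ[k] (V ⊗[k] W) ⊗[k] H :=
  Cl'' A βe.symm.toLinearMap ∘ₗ
    TensorProduct.map (TensorProduct.lift (Ft A βe ractV ρV v))
      (ρW ∘ₗ (ractW w) ∘ₗ βe.symm.toLinearMap)

noncomputable def Lam2' (A : Bialg k H) (βe : H ≃ₗ[k] H)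
    (ractV : V →ₗ[k] H →ₗ[k] V) (ρV : V →ₗ[k] V ⊗[k] H)
    (ractW : W →ₗ[k] H →ₗ[k] W) (ρW : W →ₗ[k] W ⊗[k] H) (v : V) (w : W) :
    (H ⊗[k] H) ⊗[k] H →ₗ[k] (V ⊗[k] W) ⊗[k] H :=
  Cl'' A βe.symm.toLinearMap ∘ₗ
    TensorProduct.map (TensorProduct.lift (Gt A ractV ρV v))
      (ρW ∘ₗ (ractW w) ∘ₗ βe.symm.toLinearMap)

/-- `x ↦ (v₍₀₎ ◁ x) ⊗ β²(v₍₁₎)`. -/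
noncomputable def qB (A : Bialg k H)
    (ractV : V →ₗ[k] H →ₗ[k] V) (ρV : V →ₗ[k] V ⊗[k] H) (v : V) :
    H →ₗ[k] V ⊗[k] H :=
  (TensorProduct.map (TensorProduct.lift ractV) (A.bmap ∘ₗ A.bmap)) ∘ₗ
    swapP ∘ₗ (TensorProduct.mk k (V ⊗[k] H) H (ρV v))

/-- `x ↦ (v₍₀₎ ◁ x) ⊗ v₍₁₎`. -/
noncomputable def q0 (ractV : V →ₗ[k] H →ₗ[k] V) (ρV : V →ₗ[k] V ⊗[k] H) (v : V) :
    H →ₗ[k] V ⊗[k] H :=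
  (TensorProduct.map (TensorProduct.lift ractV) LinearMap.id) ∘ₗ
    swapP ∘ₗ (TensorProduct.mk k (V ⊗[k] H) H (ρV v))

noncomputable def Lam4 (A : Bialg k H) (βe : H ≃ₗ[k] H)
    (ractV : V →ₗ[k] H →ₗ[k] V) (ρV : V →ₗ[k] V ⊗[k] H)
    (ractW : W →ₗ[k] H →ₗ[k] W) (ρW : W →ₗ[k] W ⊗[k] H) (v : V) (w : W) :
    H ⊗[k] (H ⊗[k] H) →ₗ[k] (V ⊗[k] W) ⊗[k] H :=
  Cl A βe.symm.toLinearMap ∘ₗ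
    TensorProduct.map (qB A ractV ρV v) (TensorProduct.lift (Ft A βe ractW ρW w))

noncomputable def Lam4' (A : Bialg k H) (βe : H ≃ₗ[k] H)
    (ractV : V →ₗ[k] H →ₗ[k] V) (ρV : V →ₗ[k] V ⊗[k] H)
    (ractW : W →ₗ[k] H →ₗ[k] W) (ρW : W →ₗ[k] W ⊗[k] H) (v : V) (w : W) :
    H ⊗[k] (H ⊗[k] H) →ₗ[k] (V ⊗[k] W) ⊗[k] H :=
  Cl A βe.symm.toLinearMap ∘ₗ
    TensorProduct.map (qB A ractV ρV v) (TensorProduct.lift (Gt A ractW ρW w))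

noncomputable def Lam5 (A : Bialg k H)
    (ractV : V →ₗ[k] H →ₗ[k] V) (ρV : V →ₗ[k] V ⊗[k] H)
    (ractW : W →ₗ[k] H →ₗ[k] W) (ρW : W →ₗ[k] W ⊗[k] H) (v : V) (w : W) :
    H ⊗[k] (H ⊗[k] H) →ₗ[k] (V ⊗[k] W) ⊗[k] H :=
  (TensorProduct.map LinearMap.id (TensorProduct.lift A.mul)) ∘ₗ
    (TensorProduct.assoc k (V ⊗[k] W) H H).toLinearMap ∘ₗ
      (TensorProduct.map (ClM A) LinearMap.id) ∘ₗ
        (TensorProduct.assoc k (V ⊗[k] H) (W ⊗[k] H) H).symm.toLinearMap ∘ₗ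
          (TensorProduct.map (q0 ractV ρV v)
            (TensorProduct.map (q0 ractW ρW w) A.bmap))

end Aux5
section Aux6

variable {k}

lemma lift_zero'' (r : H ⊗[k] H) :
    TensorProduct.lift (0 : H →ₗ[k] H →ₗ[k] M) r = 0 := by
  induction r using TensorProduct.induction_on <;> simp_all

lemma lift_add'' (F G : H →ₗ[k] H →ₗ[k] M) (r : H ⊗[k] H) :
    TensorProduct.lift (F + G) r
      = TensorProduct.lift F r + TensorProduct.lift G r := by
  induction r using TensorProduct.induction_on with
  | zero => simp
  | tmul a b => simp
  | add r1 r2 h1 h2 => rw [map_add, map_add, map_add, h1, h2]; abel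

lemma compat_twist {A : Bialg k H} {βe : H ≃ₗ[k] H} (hβ : βe.toLinearMap = A.bmap)
    {ract : V →ₗ[k] H →ₗ[k] V} {ρ : V →ₗ[k] V ⊗[k] H}
    (hc : ydCompat k A ract ρ) (v : V) (g : H) :
    TensorProduct.lift (Ft A βe ract ρ v) (A.comul g)
      = TensorProduct.lift (Gt A ract ρ v) (A.comul g) := by
  have h1 := lift_of_ydCompat hc v (βe.symm g)
  rw [comul_bi hβ] at h1
  have e1 : ∀ u : H ⊗[k] H,
      TensorProduct.lift (Fb A ract ρ v)
        (TensorProduct.map βe.symm.toLinearMap βe.symm.toLinearMap u)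
      = TensorProduct.lift (Ft A βe ract ρ v) u := by
    intro u
    induction u using TensorProduct.induction_on with
    | zero => simp
    | add u1 u2 g1 g2 => rw [map_add, map_add, map_add, g1, g2]
    | tmul a b =>
      simp only [TensorProduct.map_tmul, TensorProduct.lift.tmul, Fb, Ft,
        LinearMap.mk₂_apply, LinearEquiv.coe_coe]
      rw [bβ hβ]
  have e2 : ∀ u : H ⊗[k] H,
      TensorProduct.lift (Gb A ract ρ v)
        (TensorProduct.map βe.symm.toLinearMap βe.symm.toLinearMap u)
      = TensorProduct.lift (Gt A ract ρ v) u := by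
    intro u
    induction u using TensorProduct.induction_on with
    | zero => simp
    | add u1 u2 g1 g2 => rw [map_add, map_add, map_add, g1, g2]
    | tmul a b =>
      simp only [TensorProduct.map_tmul, TensorProduct.lift.tmul, Gb, Gt,
        LinearMap.mk₂_apply, LinearEquiv.coe_coe]
      rw [bβ hβ, bβ hβ]
  rw [e1, e2] at h1
  exact h1

lemma subst_left (A : Bialg k H) {F G : H ⊗[k] H →ₗ[k] M}
    (hFG : ∀ g, F (A.comul g) = G (A.comul g)) (P' : H →ₗ[k] N)
    (f : H →ₗ[k] H) (r : H ⊗[k] H) :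
    TensorProduct.map F P' (TensorProduct.map A.comul f r)
      = TensorProduct.map G P' (TensorProduct.map A.comul f r) := by
  induction r using TensorProduct.induction_on with
  | zero => simp
  | add r1 r2 h1 h2 => rw [map_add, map_add, map_add, h1, h2]
  | tmul a b => simp only [TensorProduct.map_tmul, hFG]

lemma subst_right (A : Bialg k H) {F G : H ⊗[k] H →ₗ[k] M}
    (hFG : ∀ g, F (A.comul g) = G (A.comul g)) (P' : H →ₗ[k] N)
    (f : H →ₗ[k] H) (r : H ⊗[k] H) :
    TensorProduct.map P' F (TensorProduct.map f A.comul r)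
      = TensorProduct.map P' G (TensorProduct.map f A.comul r) := by
  induction r using TensorProduct.induction_on with
  | zero => simp
  | add r1 r2 h1 h2 => rw [map_add, map_add, map_add, h1, h2]
  | tmul a b => simp only [TensorProduct.map_tmul, hFG]

lemma SC1 {A : Bialg k H} {βe : H ≃ₗ[k] H} (hβ : βe.toLinearMap = A.bmap)
    (x : H) (t : V ⊗[k] H) (s : W ⊗[k] H) :
    TensorProduct.map LinearMap.id (A.mul (A.bmap x))
        (Cl A βe.symm.toLinearMap (t ⊗ₜ[k] s))
      = Cl'' A βe.symm.toLinearMap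
          ((TensorProduct.map LinearMap.id (A.mul (A.bmap x)) t) ⊗ₜ[k] s) := by
  induction t using TensorProduct.induction_on with
  | zero => simp
  | add t1 t2 h1 h2 =>
    simp only [map_add, TensorProduct.add_tmul] at h1 h2 ⊢; rw [h1, h2]
  | tmul v' a' =>
    induction s using TensorProduct.induction_on with
    | zero => simp
    | add s1 s2 h1 h2 =>
      simp only [map_add, TensorProduct.tmul_add] at h1 h2 ⊢; rw [h1, h2]
    | tmul w' b' =>
      simp only [Cl_tmul, Cl''_tmul, TensorProduct.map_tmul, LinearMap.id_apply,
        LinearEquiv.coe_coe]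
      rw [bi_mul hβ, A.hom_assoc, bβ hβ, bi_mul hβ, βb hβ]

end Aux6
section Aux7

variable {k}

lemma S1 {A : Bialg k H} {βe : H ≃ₗ[k] H} (hβ : βe.toLinearMap = A.bmap)
    (ractV : V →ₗ[k] H →ₗ[k] V) (ρV : V →ₗ[k] V ⊗[k] H)
    (ractW : W →ₗ[k] H →ₗ[k] W) (ρW : W →ₗ[k] W ⊗[k] H)
    (v : V) (w : W) (r : H ⊗[k] H) :
    TensorProduct.lift (Fb A (ydAct k A βe.symm.toLinearMap ractV ractW)
        (ydCoact k A βe.symm.toLinearMap ρV ρW) (v ⊗ₜ[k] w)) r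
      = Lam2 A βe ractV ρV ractW ρW v w
          ((TensorProduct.assoc k H H H).symm
            (TensorProduct.map A.bmap A.comul r)) := by
  induction r using TensorProduct.induction_on with
  | zero => simp
  | add r1 r2 h1 h2 => simp only [map_add, h1, h2]
  | tmul a b =>
    rw [TensorProduct.lift.tmul]
    simp only [Fb, LinearMap.mk₂_apply]
    rw [ydAct_tmul, TensorProduct.map_tmul]
    generalize A.comul b = u
    induction u using TensorProduct.induction_on with
    | zero => simp [ydCoact_apply]
    | add u1 u2 h1 h2 =>
      simp only [map_add, TensorProduct.tmul_add, h1, h2]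
    | tmul y z =>
      simp only [TensorProduct.map_tmul, LinearEquiv.coe_coe]
      rw [ydCoact_tmul, SC1 hβ]
      simp only [Lam2, LinearMap.comp_apply, TensorProduct.assoc_symm_tmul,
        TensorProduct.map_tmul, TensorProduct.lift.tmul, Ft, LinearMap.mk₂_apply,
        LinearEquiv.coe_coe]

lemma S5 {A : Bialg k H} {βe : H ≃ₗ[k] H} (hβ : βe.toLinearMap = A.bmap)
    (ractV : V →ₗ[k] H →ₗ[k] V) (ρV : V →ₗ[k] V ⊗[k] H)
    (ractW : W →ₗ[k] H →ₗ[k] W) (ρW : W →ₗ[k] W ⊗[k] H)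
    (v : V) (w : W) (r3 : H ⊗[k] (H ⊗[k] H)) :
    Lam2' A βe ractV ρV ractW ρW v w ((TensorProduct.assoc k H H H).symm r3)
      = Lam4 A βe ractV ρV ractW ρW v w r3 := by
  induction r3 using TensorProduct.induction_on with
  | zero => simp
  | add r1 r2 h1 h2 => simp only [map_add, h1, h2]
  | tmul x u =>
    induction u using TensorProduct.induction_on with
    | zero => simp
    | add u1 u2 h1 h2 => simp only [map_add, TensorProduct.tmul_add, h1, h2]
    | tmul y z =>
      simp only [Lam2', Lam4, LinearMap.comp_apply, TensorProduct.assoc_symm_tmul,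
        TensorProduct.map_tmul, TensorProduct.lift.tmul, Gt, Ft,
        LinearMap.mk₂_apply, LinearEquiv.coe_coe, qB, TensorProduct.mk_apply]
      generalize ρV v = t
      generalize ρW (ractW w (βe.symm z)) = s
      induction t using TensorProduct.induction_on with
      | zero => simp
      | add t1 t2 h1 h2 =>
        simp only [map_add, TensorProduct.add_tmul] at h1 h2 ⊢; rw [h1, h2]
      | tmul v0 v1 =>
        induction s using TensorProduct.induction_on with
        | zero => simp
        | add s1 s2 h1 h2 =>
          simp only [map_add, TensorProduct.tmul_add] at h1 h2 ⊢; rw [h1, h2]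
        | tmul w' c =>
          simp only [TensorProduct.map_tmul, swapP_tmul, LinearMap.comp_apply,
            LinearMap.flip_apply, LinearMap.id_apply, TensorProduct.lift.tmul,
            Cl_tmul, Cl''_tmul, LinearEquiv.coe_coe]
          rw [bi_mul hβ, βb hβ, βb hβ, A.hom_assoc, ← A.bmap_mul, ← A.bmap_mul,
            βb hβ]

lemma S7 {A : Bialg k H} {βe : H ≃ₗ[k] H} (hβ : βe.toLinearMap = A.bmap)
    (ractV : V →ₗ[k] H →ₗ[k] V) (ρV : V →ₗ[k] V ⊗[k] H)
    (ractW : W →ₗ[k] H →ₗ[k] W) (ρW : W →ₗ[k] W ⊗[k] H)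
    (v : V) (w : W) (r3 : H ⊗[k] (H ⊗[k] H)) :
    Lam4' A βe ractV ρV ractW ρW v w r3
      = Lam5 A ractV ρV ractW ρW v w r3 := by
  induction r3 using TensorProduct.induction_on with
  | zero => simp
  | add r1 r2 h1 h2 => simp only [map_add, h1, h2]
  | tmul x u =>
    induction u using TensorProduct.induction_on with
    | zero => simp
    | add u1 u2 h1 h2 => simp only [map_add, TensorProduct.tmul_add, h1, h2]
    | tmul y z =>
      simp only [Lam4', Lam5, LinearMap.comp_apply, TensorProduct.map_tmul,
        TensorProduct.lift.tmul, Gt, LinearMap.mk₂_apply, LinearEquiv.coe_coe,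
        qB, q0, TensorProduct.mk_apply]
      generalize ρV v = t
      generalize ρW w = s
      induction t using TensorProduct.induction_on with
      | zero => simp
      | add t1 t2 h1 h2 =>
        simp only [map_add, TensorProduct.add_tmul] at h1 h2 ⊢; rw [h1, h2]
      | tmul v0 v1 =>
        induction s using TensorProduct.induction_on with
        | zero => simp
        | add s1 s2 h1 h2 =>
          simp only [map_add, TensorProduct.tmul_add, TensorProduct.add_tmul]
            at h1 h2 ⊢
          rw [h1, h2]
        | tmul w0 w1 =>
          simp only [TensorProduct.map_tmul, swapP_tmul, LinearMap.comp_apply,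
            LinearMap.flip_apply, LinearMap.id_apply, TensorProduct.lift.tmul,
            Cl_tmul, ClM_tmul, TensorProduct.assoc_tmul,
            TensorProduct.assoc_symm_tmul, LinearEquiv.coe_coe]
          rw [A.hom_assoc, ← A.bmap_mul, ← A.bmap_mul, βb hβ]

lemma S8 {A : Bialg k H} {βe : H ≃ₗ[k] H} (hβ : βe.toLinearMap = A.bmap)
    (ractV : V →ₗ[k] H →ₗ[k] V) (ρV : V →ₗ[k] V ⊗[k] H)
    (ractW : W →ₗ[k] H →ₗ[k] W) (ρW : W →ₗ[k] W ⊗[k] H)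
    (v : V) (w : W) (r : H ⊗[k] H) :
    TensorProduct.lift (Gb A (ydAct k A βe.symm.toLinearMap ractV ractW)
        (ydCoact k A βe.symm.toLinearMap ρV ρW) (v ⊗ₜ[k] w)) r
      = Lam5 A ractV ρV ractW ρW v w
          ((TensorProduct.assoc k H H H)
            (TensorProduct.map A.comul A.bmap r)) := by
  induction r using TensorProduct.induction_on with
  | zero => simp
  | add r1 r2 h1 h2 => simp only [map_add, h1, h2]
  | tmul g z =>
    rw [TensorProduct.lift.tmul]
    simp only [Gb, LinearMap.mk₂_apply]
    rw [ydCoact_tmul]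
    have hflip : (ydAct k A βe.symm.toLinearMap ractV ractW).flip (A.bmap g)
        = (TensorProduct.map₂ ractV ractW).flip
            (TensorProduct.map βe.symm.toLinearMap βe.symm.toLinearMap
              (A.comul (A.bmap g))) := rfl
    rw [hflip, A.comul_bmap, map_bi_b hβ, TensorProduct.map_tmul]
    generalize A.comul g = p
    induction p using TensorProduct.induction_on with
    | zero =>
      simp [TensorProduct.zero_tmul]
    | add p1 p2 h1 h2 =>
      simp only [map_add, TensorProduct.add_tmul, TensorProduct.map_add_left,
        LinearMap.add_apply] at h1 h2 ⊢
      rw [h1, h2]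
    | tmul x y =>
      simp only [TensorProduct.assoc_tmul, Lam5, LinearMap.comp_apply,
        TensorProduct.map_tmul, q0, TensorProduct.mk_apply]
      generalize ρV v = t
      generalize ρW w = s
      induction t using TensorProduct.induction_on with
      | zero => simp
      | add t1 t2 h1 h2 =>
        simp only [map_add, TensorProduct.add_tmul] at h1 h2 ⊢; rw [h1, h2]
      | tmul v0 v1 =>
        induction s using TensorProduct.induction_on with
        | zero => simp
        | add s1 s2 h1 h2 =>
          simp only [map_add, TensorProduct.tmul_add, TensorProduct.add_tmul]
            at h1 h2 ⊢
          rw [h1, h2]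
        | tmul w0 w1 =>
          simp only [TensorProduct.map_tmul, swapP_tmul, LinearMap.comp_apply,
            LinearMap.flip_apply, LinearMap.id_apply, TensorProduct.lift.tmul,
            Cl_tmul, ClM_tmul, TensorProduct.assoc_tmul,
            TensorProduct.assoc_symm_tmul, TensorProduct.map₂_apply_tmul,
            LinearEquiv.coe_coe]
          rw [bβ hβ]

end Aux7
section Aux8

variable {k}

lemma tensor_compat {A : Hopf k H} {βe : H ≃ₗ[k] H} (hβ : βe.toLinearMap = A.bmap)
    {ζV : V →ₗ[k] V} {ractV : V →ₗ[k] H →ₗ[k] V} {ρV : V →ₗ[k] V ⊗[k] H}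
    {ζW : W →ₗ[k] W} {ractW : W →ₗ[k] H →ₗ[k] W} {ρW : W →ₗ[k] W ⊗[k] H}
    (hV : IsYD k A ζV ractV ρV) (hW : IsYD k A ζW ractW ρW) :
    ydCompat k A.toBialg (ydAct k A.toBialg βe.symm.toLinearMap ractV ractW)
      (ydCoact k A.toBialg βe.symm.toLinearMap ρV ρW) := by
  apply ydCompat_of_lift
  intro x h
  induction x using TensorProduct.induction_on with
  | zero =>
    have hF : Fb A.toBialg (ydAct k A.toBialg βe.symm.toLinearMap ractV ractW)
        (ydCoact k A.toBialg βe.symm.toLinearMap ρV ρW) (0 : V ⊗[k] W) = 0 := by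
      ext a b; simp [Fb]
    have hG : Gb A.toBialg (ydAct k A.toBialg βe.symm.toLinearMap ractV ractW)
        (ydCoact k A.toBialg βe.symm.toLinearMap ρV ρW) (0 : V ⊗[k] W) = 0 := by
      ext a b; simp [Gb]
    rw [hF, hG]
  | add y z h1 h2 =>
    have hF : Fb A.toBialg (ydAct k A.toBialg βe.symm.toLinearMap ractV ractW)
        (ydCoact k A.toBialg βe.symm.toLinearMap ρV ρW) (y + z)
        = Fb A.toBialg (ydAct k A.toBialg βe.symm.toLinearMap ractV ractW)
            (ydCoact k A.toBialg βe.symm.toLinearMap ρV ρW) y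
          + Fb A.toBialg (ydAct k A.toBialg βe.symm.toLinearMap ractV ractW)
              (ydCoact k A.toBialg βe.symm.toLinearMap ρV ρW) z := by
      ext a b; simp [Fb, map_add, LinearMap.add_apply]
    have hG : Gb A.toBialg (ydAct k A.toBialg βe.symm.toLinearMap ractV ractW)
        (ydCoact k A.toBialg βe.symm.toLinearMap ρV ρW) (y + z)
        = Gb A.toBialg (ydAct k A.toBialg βe.symm.toLinearMap ractV ractW)
            (ydCoact k A.toBialg βe.symm.toLinearMap ρV ρW) y
          + Gb A.toBialg (ydAct k A.toBialg βe.symm.toLinearMap ractV ractW)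
              (ydCoact k A.toBialg βe.symm.toLinearMap ρV ρW) z := by
      ext a b; simp [Gb, map_add, LinearMap.add_apply]
    rw [hF, hG, lift_add'', lift_add'', h1, h2]
  | tmul v w =>
    calc
      TensorProduct.lift (Fb A.toBialg
          (ydAct k A.toBialg βe.symm.toLinearMap ractV ractW)
          (ydCoact k A.toBialg βe.symm.toLinearMap ρV ρW) (v ⊗ₜ[k] w)) (A.comul h)
        = Lam2 A.toBialg βe ractV ρV ractW ρW v w
            ((TensorProduct.assoc k H H H).symm
              (TensorProduct.map A.bmap A.comul (A.comul h))) :=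
          S1 hβ ractV ρV ractW ρW v w _
      _ = Lam2 A.toBialg βe ractV ρV ractW ρW v w
            (TensorProduct.map A.comul A.bmap (A.comul h)) := by
          rw [A.coassoc, LinearEquiv.symm_apply_apply]
      _ = Lam2' A.toBialg βe ractV ρV ractW ρW v w
            (TensorProduct.map A.comul A.bmap (A.comul h)) := by
          simp only [Lam2, Lam2', LinearMap.comp_apply]
          rw [subst_left A.toBialg (compat_twist hβ hV.compat v) _ A.bmap]
      _ = Lam2' A.toBialg βe ractV ρV ractW ρW v w
            ((TensorProduct.assoc k H H H).symm
              (TensorProduct.map A.bmap A.comul (A.comul h))) := by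
          rw [A.coassoc, LinearEquiv.symm_apply_apply]
      _ = Lam4 A.toBialg βe ractV ρV ractW ρW v w
            (TensorProduct.map A.bmap A.comul (A.comul h)) :=
          S5 hβ ractV ρV ractW ρW v w _
      _ = Lam4' A.toBialg βe ractV ρV ractW ρW v w
            (TensorProduct.map A.bmap A.comul (A.comul h)) := by
          simp only [Lam4, Lam4', LinearMap.comp_apply]
          rw [subst_right A.toBialg (compat_twist hβ hW.compat w) _ A.bmap]
      _ = Lam5 A.toBialg ractV ρV ractW ρW v w
            (TensorProduct.map A.bmap A.comul (A.comul h)) :=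
          S7 hβ ractV ρV ractW ρW v w _
      _ = Lam5 A.toBialg ractV ρV ractW ρW v w
            ((TensorProduct.assoc k H H H)
              (TensorProduct.map A.comul A.bmap (A.comul h))) := by
          rw [A.coassoc]
      _ = TensorProduct.lift (Gb A.toBialg
            (ydAct k A.toBialg βe.symm.toLinearMap ractV ractW)
            (ydCoact k A.toBialg βe.symm.toLinearMap ρV ρW) (v ⊗ₜ[k] w))
            (A.comul h) := (S8 hβ ractV ρV ractW ρW v w _).symm

end Aux8
/-- the tensor product of two right-right Yetter–Drinfel'd modules, with
`(v⊗w) ◁ h = v ◁ β⁻¹(h_1) ⊗ w ◁ β⁻¹(h_2)` and `ρ(v⊗w) = v_(0) ⊗ w_(0) ⊗ β⁻¹(v_(1)w_(1))`,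
is again a right-right Yetter–Drinfel'd module. -/
theorem yd_tensor (H : Type) [AddCommGroup H] [Module k H]
    (A : Hopf k H) (βe : H ≃ₗ[k] H) (hβ : βe.toLinearMap = A.bmap)
    (V W : Type) [AddCommGroup V] [Module k V] [AddCommGroup W] [Module k W]
    (ζV : V →ₗ[k] V) (ractV : V →ₗ[k] H →ₗ[k] V) (ρV : V →ₗ[k] V ⊗[k] H)
    (ζW : W →ₗ[k] W) (ractW : W →ₗ[k] H →ₗ[k] W) (ρW : W →ₗ[k] W ⊗[k] H)
    (hV : IsYD k A ζV ractV ρV) (hW : IsYD k A ζW ractW ρW) :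
    IsYD k A (TensorProduct.map ζV ζW)
      (ydAct k A.toBialg βe.symm.toLinearMap ractV ractW)
      (ydCoact k A.toBialg βe.symm.toLinearMap ρV ρW) := by
  exact ⟨tensor_rmod hβ hV.rmod hW.rmod, tensor_rcom hβ hV.rcom hW.rcom,
    tensor_compat hβ hV hW⟩

end HomHopf
end

section
/- Let (H, β) be a Hom-Hopf algebra with β bijective and let (V, ζ_V), (W, ζ_W) be right-right Yetter-Drinfel'd modules with ζ_V, ζ_W bijective. Then the map c_{V,W} : V ⊗ W → W ⊗ V, c_{V,W}(v ⊗ w) = ζ_W^{-1}(w_{(0)}) ⊗ ζ_V^{-1}(v) ◁ β^{-2}(w_{(1)}), is a morphism of right H-modules, where the tensor product V ⊗ W carries the YD-module structure (v⊗w)◁h = v◁β^{-1}(h_1) ⊗ w◁β^{-1}(h_2). -/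
open TensorProduct

namespace HomHopf

variable (k : Type) [Field k]

variable {H : Type} [AddCommGroup H] [Module k H]
variable {M N P V W U : Type}
  [AddCommGroup M] [Module k M] [AddCommGroup N] [Module k N]
  [AddCommGroup P] [Module k P] [AddCommGroup V] [Module k V]
  [AddCommGroup W] [Module k W] [AddCommGroup U] [Module k U]

lemma braid_tmul (ractV : V →ₗ[k] H →ₗ[k] V) (ζVinv : V →ₗ[k] V)
    (ρW : W →ₗ[k] W ⊗[k] H) (ζWinv : W →ₗ[k] W) (βinv : H →ₗ[k] H) (v : V) (w : W) :
    braid k ractV ζVinv ρW ζWinv βinv (v ⊗ₜ[k] w)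
      = TensorProduct.map ζWinv ((ractV (ζVinv v)).comp (βinv.comp βinv)) (ρW w) := by
  rw [braid]
  simp only [LinearMap.comp_apply, LinearEquiv.coe_coe, map_tmul, LinearMap.id_apply]
  induction ρW w using TensorProduct.induction_on with
  | zero => simp
  | tmul y t => simp [TensorProduct.leftComm_tmul]
  | add a b ha hb => simp [tmul_add, map_add, ha, hb]
/-- the braiding `c_{V,W}(v⊗w) = ζ_W⁻¹(w_(0)) ⊗ ζ_V⁻¹(v) ◁ β⁻²(w_(1))` is a
morphism of right H-modules. -/
theorem braid_module_morphism (H : Type) [AddCommGroup H] [Module k H]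
    (A : Hopf k H) (βe : H ≃ₗ[k] H) (hβ : βe.toLinearMap = A.bmap)
    (V W : Type) [AddCommGroup V] [Module k V] [AddCommGroup W] [Module k W]
    (ζVe : V ≃ₗ[k] V) (ractV : V →ₗ[k] H →ₗ[k] V) (ρV : V →ₗ[k] V ⊗[k] H)
    (ζWe : W ≃ₗ[k] W) (ractW : W →ₗ[k] H →ₗ[k] W) (ρW : W →ₗ[k] W ⊗[k] H)
    (hV : IsYD k A ζVe.toLinearMap ractV ρV) (hW : IsYD k A ζWe.toLinearMap ractW ρW) :
    (∀ (x : V ⊗[k] W) (h : H),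
        braid k ractV ζVe.symm.toLinearMap ρW ζWe.symm.toLinearMap βe.symm.toLinearMap
            (ydAct k A.toBialg βe.symm.toLinearMap ractV ractW x h)
          = ydAct k A.toBialg βe.symm.toLinearMap ractW ractV
              (braid k ractV ζVe.symm.toLinearMap ρW ζWe.symm.toLinearMap
                βe.symm.toLinearMap x) h) ∧
    (braid k ractV ζVe.symm.toLinearMap ρW ζWe.symm.toLinearMap βe.symm.toLinearMap).comp
        (TensorProduct.map ζVe.toLinearMap ζWe.toLinearMap)
      = (TensorProduct.map ζWe.toLinearMap ζVe.toLinearMap).comp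
          (braid k ractV ζVe.symm.toLinearMap ρW ζWe.symm.toLinearMap
            βe.symm.toLinearMap) := by
  classical
  set βinv : H →ₗ[k] H := βe.symm.toLinearMap with hβinvdef
  set ζVinv : V →ₗ[k] V := ζVe.symm.toLinearMap
  set ζWinv : W →ₗ[k] W := ζWe.symm.toLinearMap
  have hβi1 : ∀ a, βinv (A.bmap a) = a := by
    intro a; simp [hβinvdef, ← hβ]
  have hβi2 : ∀ a, A.bmap (βinv a) = a := by
    intro a; simp [hβinvdef, ← hβ]
  have hζVi1 : ∀ m, ζVinv (ζVe.toLinearMap m) = m := fun m => ζVe.symm_apply_apply m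
  have hζVi2 : ∀ m, ζVe.toLinearMap (ζVinv m) = m := fun m => ζVe.apply_symm_apply m
  have hζWi1 : ∀ m, ζWinv (ζWe.toLinearMap m) = m := fun m => ζWe.symm_apply_apply m
  have hζWi2 : ∀ m, ζWe.toLinearMap (ζWinv m) = m := fun m => ζWe.apply_symm_apply m
  have hζVact : ∀ (m : V) (a : H), ζVinv (ractV m a) = ractV (ζVinv m) (βinv a) := by
    intro m a
    have := hV.rmod.zeta_act (ζVinv m) (βinv a)
    rw [hζVi2, hβi2] at this
    rw [← this, hζVi1]
  have hζWact : ∀ (m : W) (a : H), ζWinv (ractW m a) = ractW (ζWinv m) (βinv a) := by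
    intro m a
    have := hW.rmod.zeta_act (ζWinv m) (βinv a)
    rw [hζWi2, hβi2] at this
    rw [← this, hζWi1]
  have hβinvmul : ∀ a b, βinv (A.mul a b) = A.mul (βinv a) (βinv b) := by
    intro a b
    have h0 := congrArg βinv (A.bmap_mul (βinv a) (βinv b))
    rw [hβi1, hβi2, hβi2] at h0
    exact h0.symm
  constructor
  · intro x h
    induction x using TensorProduct.induction_on with
    | zero => simp
    | add a b ha hb => simp only [map_add, LinearMap.add_apply, ha, hb]
    | tmul v w =>
      obtain ⟨s, hs⟩ := TensorProduct.exists_finset (A.comul (βe.symm h))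
      have hΔh : A.comul h = ∑ p ∈ s, (A.bmap p.1) ⊗ₜ[k] (A.bmap p.2) := by
        have h1 : A.comul (A.bmap (βinv h)) = TensorProduct.map A.bmap A.bmap (A.comul (βinv h)) :=
          A.comul_bmap _
        rw [hβi2] at h1
        rw [h1]
        have h2 : A.comul (βinv h) = ∑ p ∈ s, p.1 ⊗ₜ[k] p.2 := hs
        rw [h2, map_sum]
        simp [map_tmul]
      have hΔinv : TensorProduct.map βinv βinv (A.comul h) = ∑ p ∈ s, p.1 ⊗ₜ[k] p.2 := by
        rw [hΔh, map_sum]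
        simp [map_tmul, hβi1]
      have step1 : ydAct k A.toBialg βinv ractV ractW (v ⊗ₜ[k] w) h
          = ∑ p ∈ s, (ractV v p.1) ⊗ₜ[k] (ractW w p.2) := by
        rw [ydAct, LinearMap.compl₂_apply, LinearMap.comp_apply, hΔinv, map_sum]
        simp [TensorProduct.map₂_apply_tmul]
      set F : W ⊗[k] H →ₗ[k] W ⊗[k] V :=
        TensorProduct.map ζWinv ((ractV v).comp (βinv.comp (βinv.comp βinv))) with hF
      have keyA : ∀ (a : H) (z : W ⊗[k] H),
          TensorProduct.map ζWinv
              ((ractV (ζVinv (ractV v a))).comp (βinv.comp βinv)) z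
            = F (TensorProduct.map LinearMap.id (A.mul (A.bmap (A.bmap a))) z) := by
        intro a z
        induction z using TensorProduct.induction_on with
        | zero => simp
        | add c d hc hd => simp only [map_add, hc, hd]
        | tmul y t =>
          simp only [map_tmul, LinearMap.comp_apply, LinearMap.id_apply, hF]
          congr 1
          have hassoc := hV.rmod.assoc (ζVinv v) (βinv a) (βinv (βinv (βinv t)))
          rw [hζVi2] at hassoc
          rw [hζVact]
          calc ractV (ractV (ζVinv v) (βinv a)) (βinv (βinv t))
              = ractV (ractV (ζVinv v) (βinv a)) (A.bmap (βinv (βinv (βinv t)))) := by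
                rw [hβi2]
            _ = ractV v (A.mul (βinv a) (βinv (βinv (βinv t)))) := hassoc
            _ = ractV v (βinv (βinv (βinv (A.mul (A.bmap (A.bmap a)) t)))) := by
                simp [hβinvmul, hβi1]
      have keyB : ∀ (a b : H) (z : W ⊗[k] H),
          TensorProduct.map₂ ractW ractV
              (TensorProduct.map ζWinv
                ((ractV (ζVinv v)).comp (βinv.comp βinv)) z) (a ⊗ₜ[k] b)
            = F (TensorProduct.map (ractW.flip (A.bmap a))
                  ((A.mul.flip (A.bmap (A.bmap b))).comp A.bmap) z) := by
        intro a b z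
        induction z using TensorProduct.induction_on with
        | zero => simp
        | add c d hc hd => simp only [map_add, LinearMap.add_apply, hc, hd]
        | tmul y t =>
          simp only [map_tmul, LinearMap.comp_apply, TensorProduct.map₂_apply_tmul,
            LinearMap.flip_apply, hF]
          congr 1
          · rw [hζWact y (A.bmap a), hβi1]
          · have hassoc := hV.rmod.assoc (ζVinv v) (βinv (βinv t)) (βinv b)
            rw [hζVi2, hβi2] at hassoc
            rw [hassoc]
            simp [hβinvmul, hβi1]
      calc braid k ractV ζVinv ρW ζWinv βinv
              (ydAct k A.toBialg βinv ractV ractW (v ⊗ₜ[k] w) h)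
          = ∑ p ∈ s, braid k ractV ζVinv ρW ζWinv βinv
              ((ractV v p.1) ⊗ₜ[k] (ractW w p.2)) := by rw [step1, map_sum]
        _ = ∑ p ∈ s, F (TensorProduct.map LinearMap.id (A.mul (A.bmap (A.bmap p.1)))
              (ρW (ractW w p.2))) := by
            refine Finset.sum_congr rfl fun p _ => ?_
            rw [braid_tmul, keyA]
        _ = F (∑ p ∈ s, TensorProduct.map (ractW.flip (A.bmap p.1))
              ((A.mul.flip (A.bmap (A.bmap p.2))).comp A.bmap) (ρW w)) := by
            rw [← map_sum]
            congr 1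
            exact hW.compat w (βe.symm h) (H × H) s (fun p => p.1) (fun p => p.2) hs
        _ = ∑ p ∈ s, TensorProduct.map₂ ractW ractV
              (TensorProduct.map ζWinv
                ((ractV (ζVinv v)).comp (βinv.comp βinv)) (ρW w)) (p.1 ⊗ₜ[k] p.2) := by
            rw [map_sum]
            exact Finset.sum_congr rfl fun p _ => (keyB p.1 p.2 (ρW w)).symm
        _ = ydAct k A.toBialg βinv ractW ractV
              (braid k ractV ζVinv ρW ζWinv βinv (v ⊗ₜ[k] w)) h := by
            rw [braid_tmul, ydAct, LinearMap.compl₂_apply, LinearMap.comp_apply, hΔinv,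
              map_sum]
  · apply TensorProduct.ext'
    intro v w
    simp only [LinearMap.comp_apply, map_tmul]
    rw [braid_tmul, braid_tmul, hζVi1]
    have hρζ : ρW (ζWe.toLinearMap w) = TensorProduct.map ζWe.toLinearMap A.bmap (ρW w) :=
      hW.rcom.coact_zeta w
    rw [hρζ]
    induction ρW w using TensorProduct.induction_on with
    | zero => simp
    | add c d hc hd => simp only [map_add, hc, hd]
    | tmul y t =>
      simp only [map_tmul, LinearMap.comp_apply]
      rw [hζWi1, hβi1]
      have h2 := hV.rmod.zeta_act (ζVinv v) (βinv (βinv t))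
      rw [hζVi2, hβi2] at h2
      congr 1
      · exact (hζWi2 y).symm
      · exact h2.symm

end HomHopf
end

section
/- Let (H, β) be a Hom-Hopf algebra with β bijective and let (V, ζ_V), (W, ζ_W) be right-right Yetter-Drinfel'd modules with ζ_V, ζ_W bijective. Then c_{V,W}(v ⊗ w) = ζ_W^{-1}(w_{(0)}) ⊗ ζ_V^{-1}(v) ◁ β^{-2}(w_{(1)}) is a morphism of right H-comodules, i.e. ρ ∘ c_{V,W} = (c_{V,W} ⊗ id) ∘ ρ, where V ⊗ W and W ⊗ V carry the coaction ρ(v ⊗ w) = v_{(0)} ⊗ w_{(0)} ⊗ β^{-1}(v_{(1)}w_{(1)}). -/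
open TensorProduct

namespace HomHopf

variable (k : Type) [Field k]

variable {H : Type} [AddCommGroup H] [Module k H]
variable {M N P V W U : Type}
  [AddCommGroup M] [Module k M] [AddCommGroup N] [Module k N]
  [AddCommGroup P] [Module k P] [AddCommGroup V] [Module k V]
  [AddCommGroup W] [Module k W] [AddCommGroup U] [Module k U]

section AuxBraid

/-- Cancellation of a tensor map of equivalences with its inverse. -/
lemma map_symm_cancel (f : M ≃ₗ[k] M) (g : N ≃ₗ[k] N) (x : M ⊗[k] N) :
    TensorProduct.map f.symm.toLinearMap g.symm.toLinearMap
      (TensorProduct.map f.toLinearMap g.toLinearMap x) = x := by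
  induction x using TensorProduct.induction_on with
  | zero => simp
  | tmul a b => simp
  | add a b ha hb => simp [ha, hb]

/-- Inverse form of `coact_zeta`. -/
lemma invcoact (A : Bialg k H) (βe : H ≃ₗ[k] H) (hβ : βe.toLinearMap = A.bmap)
    (ζe : M ≃ₗ[k] M) (ρ : M →ₗ[k] M ⊗[k] H) (hc : IsRCom k A ζe.toLinearMap ρ) (m : M) :
    ρ (ζe.symm m) = TensorProduct.map ζe.symm.toLinearMap βe.symm.toLinearMap (ρ m) := by
  have h := hc.coact_zeta (ζe.symm m)
  rw [← hβ] at h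
  simp only [LinearEquiv.coe_coe, LinearEquiv.apply_symm_apply] at h
  rw [h, map_symm_cancel]

/-- Inverse form of `comul_bmap`. -/
lemma invcomul (A : Bialg k H) (βe : H ≃ₗ[k] H) (hβ : βe.toLinearMap = A.bmap) (c : H) :
    A.comul (βe.symm c)
      = TensorProduct.map βe.symm.toLinearMap βe.symm.toLinearMap (A.comul c) := by
  have h := A.comul_bmap (βe.symm c)
  rw [← hβ] at h
  simp only [LinearEquiv.coe_coe, LinearEquiv.apply_symm_apply] at h
  rw [h, map_symm_cancel]

/-- Auxiliary map computing the left-hand side of the comodule-morphism identity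
from `ρW(w₀) ⊗ β(w₁)`. -/
noncomputable def auxL (A : Bialg k H) (βinv : H →ₗ[k] H)
    (ractV : V →ₗ[k] H →ₗ[k] V) (ρV : V →ₗ[k] V ⊗[k] H)
    (ζVinv : V →ₗ[k] V) (ζWinv : W →ₗ[k] W) (v : V) :
    (W ⊗[k] H) ⊗[k] H →ₗ[k] (W ⊗[k] V) ⊗[k] H :=
  (TensorProduct.assoc k W V H).symm.toLinearMap ∘ₗ
    (TensorProduct.map ζWinv
      ((TensorProduct.map LinearMap.id (βinv ∘ₗ TensorProduct.lift A.mul)) ∘ₗ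
        (TensorProduct.leftComm k H V H).toLinearMap ∘ₗ
        (TensorProduct.map βinv (ρV ∘ₗ (ractV (ζVinv v)) ∘ₗ βinv ∘ₗ βinv ∘ₗ βinv)))) ∘ₗ
    (TensorProduct.assoc k W H H).toLinearMap

/-- Auxiliary map computing the right-hand side of the comodule-morphism identity
from `ρW(w₀) ⊗ β(w₁)`. -/
noncomputable def auxR (A : Bialg k H) (βinv : H →ₗ[k] H)
    (ractV : V →ₗ[k] H →ₗ[k] V) (ζVinv : V →ₗ[k] V) (ζWinv : W →ₗ[k] W)
    (t : V ⊗[k] H) :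
    (W ⊗[k] H) ⊗[k] H →ₗ[k] (W ⊗[k] V) ⊗[k] H :=
  (TensorProduct.assoc k W V H).symm.toLinearMap ∘ₗ
    (TensorProduct.map ζWinv
      ((TensorProduct.map
          (TensorProduct.lift ((ractV ∘ₗ ζVinv).compl₂ (βinv ∘ₗ βinv)))
          (βinv ∘ₗ TensorProduct.lift (A.mul.compl₂ βinv))) ∘ₗ
        (TensorProduct.tensorTensorTensorComm k V H H H).toLinearMap ∘ₗ
        (TensorProduct.mk k (V ⊗[k] H) (H ⊗[k] H) t))) ∘ₗ
    (TensorProduct.assoc k W H H).toLinearMap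

lemma auxL_apply (A : Bialg k H) (βinv : H →ₗ[k] H)
    (ractV : V →ₗ[k] H →ₗ[k] V) (ρV : V →ₗ[k] V ⊗[k] H)
    (ζVinv : V →ₗ[k] V) (ζWinv : W →ₗ[k] W) (v : V) (y : W) (a1 a2 : H) :
    auxL k A βinv ractV ρV ζVinv ζWinv v ((y ⊗ₜ[k] a1) ⊗ₜ[k] a2)
      = (TensorProduct.assoc k W V H).symm (ζWinv y ⊗ₜ[k]
          (TensorProduct.map LinearMap.id βinv)
            ((TensorProduct.map LinearMap.id (A.mul (βinv a1)))
              (ρV (ractV (ζVinv v) (βinv (βinv (βinv a2))))))) := by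
  unfold auxL
  simp only [LinearMap.comp_apply, LinearEquiv.coe_coe, assoc_tmul, map_tmul,
    LinearMap.id_coe, id_eq]
  generalize ρV (ractV (ζVinv v) (βinv (βinv (βinv a2)))) = X
  induction X using TensorProduct.induction_on with
  | zero => simp
  | tmul p q => simp
  | add p q hp hq => simp only [tmul_add, map_add, hp, hq]

lemma auxR_apply (A : Bialg k H) (βinv : H →ₗ[k] H)
    (ractV : V →ₗ[k] H →ₗ[k] V) (ζVinv : V →ₗ[k] V) (ζWinv : W →ₗ[k] W)
    (t : V ⊗[k] H) (y : W) (a b : H) :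
    auxR k A βinv ractV ζVinv ζWinv t ((y ⊗ₜ[k] a) ⊗ₜ[k] b)
      = (TensorProduct.assoc k W V H).symm (ζWinv y ⊗ₜ[k]
          (TensorProduct.map (((ractV ∘ₗ ζVinv).compl₂ (βinv ∘ₗ βinv)).flip a)
            (βinv ∘ₗ ((A.mul.compl₂ βinv).flip b)) t)) := by
  unfold auxR
  simp only [LinearMap.comp_apply, LinearEquiv.coe_coe, assoc_tmul, map_tmul,
    LinearMap.id_coe, id_eq, mk_apply]
  induction t using TensorProduct.induction_on with
  | zero => simp
  | tmul p g => simp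
  | add p q hp hq => simp only [add_tmul, map_add, tmul_add, hp, hq]

lemma auxR_zero (A : Bialg k H) (βinv : H →ₗ[k] H)
    (ractV : V →ₗ[k] H →ₗ[k] V) (ζVinv : V →ₗ[k] V) (ζWinv : W →ₗ[k] W) :
    auxR (W := W) k A βinv ractV ζVinv ζWinv 0 = 0 := by
  unfold auxR
  simp only [map_zero, LinearMap.comp_zero, LinearMap.zero_comp,
    TensorProduct.map_zero_right]

lemma auxR_add (A : Bialg k H) (βinv : H →ₗ[k] H)
    (ractV : V →ₗ[k] H →ₗ[k] V) (ζVinv : V →ₗ[k] V) (ζWinv : W →ₗ[k] W)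
    (t1 t2 : V ⊗[k] H) :
    auxR (W := W) k A βinv ractV ζVinv ζWinv (t1 + t2)
      = auxR k A βinv ractV ζVinv ζWinv t1 + auxR k A βinv ractV ζVinv ζWinv t2 := by
  unfold auxR
  simp only [map_add, LinearMap.comp_add, LinearMap.add_comp,
    TensorProduct.map_add_right]

lemma bridgeR (A : Bialg k H) (βe : H ≃ₗ[k] H) (ζVe : V ≃ₗ[k] V)
    (ractV : V →ₗ[k] H →ₗ[k] V) (a b : H) (t : V ⊗[k] H) :
    TensorProduct.map LinearMap.id βe.symm.toLinearMap
      (TensorProduct.map (ractV.flip (βe.symm (βe.symm a)))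
        ((A.mul.flip (βe.symm b)) ∘ₗ βe.toLinearMap)
        (TensorProduct.map ζVe.symm.toLinearMap βe.symm.toLinearMap t))
      = TensorProduct.map
          (((ractV ∘ₗ ζVe.symm.toLinearMap).compl₂
            (βe.symm.toLinearMap ∘ₗ βe.symm.toLinearMap)).flip a)
          (βe.symm.toLinearMap ∘ₗ ((A.mul.compl₂ βe.symm.toLinearMap).flip b)) t := by
  induction t using TensorProduct.induction_on with
  | zero => simp
  | tmul p g =>
      simp [LinearMap.flip_apply, LinearMap.compl₂_apply, LinearMap.comp_apply]
  | add p q hp hq => simp only [map_add, hp, hq]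

lemma claimL (A : Bialg k H) (βe : H ≃ₗ[k] H) (hβ : βe.toLinearMap = A.bmap)
    (ζVe : V ≃ₗ[k] V) (ractV : V →ₗ[k] H →ₗ[k] V) (ρV : V →ₗ[k] V ⊗[k] H)
    (ζWe : W ≃ₗ[k] W) (ρW : W →ₗ[k] W ⊗[k] H)
    (hWr : IsRCom k A ζWe.toLinearMap ρW) (v : V) (w : W) :
    ydCoact k A βe.symm.toLinearMap ρW ρV
        (braid k ractV ζVe.symm.toLinearMap ρW ζWe.symm.toLinearMap βe.symm.toLinearMap
          (v ⊗ₜ[k] w))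
      = auxL k A βe.symm.toLinearMap ractV ρV ζVe.symm.toLinearMap ζWe.symm.toLinearMap v
          (TensorProduct.map ρW βe.toLinearMap (ρW w)) := by
  simp only [braid, ydCoact, LinearMap.comp_apply, map_tmul, LinearMap.id_coe, id_eq,
    LinearEquiv.coe_coe]
  generalize ρW w = t
  induction t using TensorProduct.induction_on with
  | zero => simp
  | add t1 t2 h1 h2 => simp only [map_add, tmul_add, h1, h2]
  | tmul x a =>
      simp only [map_tmul, LinearMap.comp_apply, LinearEquiv.coe_coe, leftComm_tmul,
        lift.tmul, LinearMap.id_coe, id_eq]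
      rw [invcoact k A βe hβ ζWe ρW hWr x]
      generalize ρW x = u
      induction u using TensorProduct.induction_on with
      | zero => simp
      | add u1 u2 h1 h2 => simp only [map_add, add_tmul, h1, h2]
      | tmul y c =>
          rw [auxL_apply]
          simp only [map_tmul, LinearEquiv.coe_coe, LinearEquiv.symm_apply_apply,
            LinearMap.id_coe, id_eq]
          generalize ρV (ractV (ζVe.symm v) (βe.symm (βe.symm a))) = s
          induction s using TensorProduct.induction_on with
          | zero => simp
          | add s1 s2 h1 h2 => simp only [map_add, tmul_add, h1, h2]
          | tmul p q => simp

lemma claimR (A : Bialg k H) (βe : H ≃ₗ[k] H)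
    (ζVe : V ≃ₗ[k] V) (ractV : V →ₗ[k] H →ₗ[k] V) (ρV : V →ₗ[k] V ⊗[k] H)
    (ζWe : W ≃ₗ[k] W) (ρW : W →ₗ[k] W ⊗[k] H) (v : V) (w : W) :
    TensorProduct.map
        (braid k ractV ζVe.symm.toLinearMap ρW ζWe.symm.toLinearMap βe.symm.toLinearMap)
        LinearMap.id
        (ydCoact k A βe.symm.toLinearMap ρV ρW (v ⊗ₜ[k] w))
      = auxR k A βe.symm.toLinearMap ractV ζVe.symm.toLinearMap ζWe.symm.toLinearMap
          (ρV v) (TensorProduct.map ρW βe.toLinearMap (ρW w)) := by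
  simp only [ydCoact, LinearMap.comp_apply, map_tmul, LinearMap.id_coe, id_eq,
    LinearEquiv.coe_coe]
  generalize ρW w = t
  induction t using TensorProduct.induction_on with
  | zero => simp
  | add t1 t2 h1 h2 => simp only [map_add, tmul_add, h1, h2]
  | tmul x a =>
      simp only [map_tmul, LinearEquiv.coe_coe]
      generalize ρV v = s
      induction s using TensorProduct.induction_on with
      | zero => simp [auxR_zero]
      | add s1 s2 h1 h2 =>
          simp only [add_tmul, map_add, auxR_add, LinearMap.add_apply, h1, h2]
      | tmul p g =>
          simp only [tensorTensorTensorComm_tmul, map_tmul, LinearMap.comp_apply,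
            LinearEquiv.coe_coe, lift.tmul, LinearMap.id_coe, id_eq, braid]
          generalize ρW x = u
          induction u using TensorProduct.induction_on with
          | zero => simp
          | add u1 u2 h1 h2 => simp only [map_add, tmul_add, add_tmul, h1, h2]
          | tmul y c =>
              rw [auxR_apply]
              simp [LinearMap.flip_apply, LinearMap.compl₂_apply]

lemma claimE (A : Bialg k H) (βe : H ≃ₗ[k] H) (hβ : βe.toLinearMap = A.bmap)
    (ζVe : V ≃ₗ[k] V) (ractV : V →ₗ[k] H →ₗ[k] V) (ρV : V →ₗ[k] V ⊗[k] H)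
    (ζWe : W ≃ₗ[k] W)
    (hVr : IsRCom k A ζVe.toLinearMap ρV) (hyd : ydCompat k A ractV ρV)
    (v : V) (t : W ⊗[k] H) :
    auxL k A βe.symm.toLinearMap ractV ρV ζVe.symm.toLinearMap ζWe.symm.toLinearMap v
        ((TensorProduct.assoc k W H H).symm
          (TensorProduct.map ζWe.toLinearMap A.comul t))
      = auxR k A βe.symm.toLinearMap ractV ζVe.symm.toLinearMap ζWe.symm.toLinearMap
          (ρV v)
          ((TensorProduct.assoc k W H H).symm
            (TensorProduct.map ζWe.toLinearMap A.comul t)) := by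
  induction t using TensorProduct.induction_on with
  | zero => simp
  | add t1 t2 h1 h2 => simp only [map_add, h1, h2]
  | tmul x a =>
      simp only [map_tmul, LinearEquiv.coe_coe]
      obtain ⟨S, hS⟩ := TensorProduct.exists_finset (A.comul a)
      rw [hS]
      simp only [tmul_sum, map_sum, assoc_symm_tmul]
      have hcom : A.comul (βe.symm (βe.symm (βe.symm a)))
          = ∑ i ∈ S, (βe.symm (βe.symm (βe.symm i.1))) ⊗ₜ[k]
              (βe.symm (βe.symm (βe.symm i.2))) := by
        rw [invcomul k A βe hβ, invcomul k A βe hβ, invcomul k A βe hβ, hS]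
        simp
      have hy := hyd (ζVe.symm v) (βe.symm (βe.symm (βe.symm a))) (H × H) S
        (fun i => βe.symm (βe.symm (βe.symm i.1)))
        (fun i => βe.symm (βe.symm (βe.symm i.2))) hcom
      rw [← hβ] at hy
      simp only [LinearEquiv.coe_coe, LinearEquiv.apply_symm_apply] at hy
      rw [invcoact k A βe hβ ζVe ρV hVr v] at hy
      have hy' := congrArg (fun z => (TensorProduct.assoc k W V H).symm
        (x ⊗ₜ[k] (TensorProduct.map (LinearMap.id (R := k) (M := V))
          βe.symm.toLinearMap) z)) hy
      simp only [map_sum, tmul_sum] at hy'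
      have h1 : ∀ i ∈ S,
          auxL k A βe.symm.toLinearMap ractV ρV ζVe.symm.toLinearMap
            ζWe.symm.toLinearMap v ((ζWe x ⊗ₜ[k] i.1) ⊗ₜ[k] i.2)
          = (TensorProduct.assoc k W V H).symm
              (x ⊗ₜ[k] (TensorProduct.map LinearMap.id βe.symm.toLinearMap)
                ((TensorProduct.map LinearMap.id (A.mul (βe.symm i.1)))
                  (ρV (ractV (ζVe.symm v) (βe.symm (βe.symm (βe.symm i.2))))))) := by
        intro i _
        rw [auxL_apply]
        simp only [LinearEquiv.coe_coe, LinearEquiv.symm_apply_apply]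
      have h2 : ∀ i ∈ S,
          auxR k A βe.symm.toLinearMap ractV ζVe.symm.toLinearMap ζWe.symm.toLinearMap
            (ρV v) ((ζWe x ⊗ₜ[k] i.1) ⊗ₜ[k] i.2)
          = (TensorProduct.assoc k W V H).symm
              (x ⊗ₜ[k] (TensorProduct.map LinearMap.id βe.symm.toLinearMap)
                ((TensorProduct.map (ractV.flip (βe.symm (βe.symm i.1)))
                    ((A.mul.flip (βe.symm i.2)) ∘ₗ βe.toLinearMap))
                  (TensorProduct.map ζVe.symm.toLinearMap βe.symm.toLinearMap
                    (ρV v)))) := by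
        intro i _
        rw [auxR_apply, ← bridgeR]
        simp only [LinearEquiv.coe_coe, LinearEquiv.symm_apply_apply]
      exact (Finset.sum_congr rfl h1).trans (hy'.trans (Finset.sum_congr rfl h2).symm)

end AuxBraid

/-- the braiding `c_{V,W}` is a morphism of right H-comodules:
`ρ ∘ c_{V,W} = (c_{V,W} ⊗ id) ∘ ρ`. -/
theorem braid_comodule_morphism (H : Type) [AddCommGroup H] [Module k H]
    (A : Hopf k H) (βe : H ≃ₗ[k] H) (hβ : βe.toLinearMap = A.bmap)
    (V W : Type) [AddCommGroup V] [Module k V] [AddCommGroup W] [Module k W]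
    (ζVe : V ≃ₗ[k] V) (ractV : V →ₗ[k] H →ₗ[k] V) (ρV : V →ₗ[k] V ⊗[k] H)
    (ζWe : W ≃ₗ[k] W) (ractW : W →ₗ[k] H →ₗ[k] W) (ρW : W →ₗ[k] W ⊗[k] H)
    (hV : IsYD k A ζVe.toLinearMap ractV ρV) (hW : IsYD k A ζWe.toLinearMap ractW ρW) :
    ((ydCoact k A.toBialg βe.symm.toLinearMap ρW ρV).comp
        (braid k ractV ζVe.symm.toLinearMap ρW ζWe.symm.toLinearMap βe.symm.toLinearMap)
      = (TensorProduct.map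
            (braid k ractV ζVe.symm.toLinearMap ρW ζWe.symm.toLinearMap
              βe.symm.toLinearMap) LinearMap.id).comp
          (ydCoact k A.toBialg βe.symm.toLinearMap ρV ρW)) ∧
    (braid k ractV ζVe.symm.toLinearMap ρW ζWe.symm.toLinearMap βe.symm.toLinearMap).comp
        (TensorProduct.map ζVe.toLinearMap ζWe.toLinearMap)
      = (TensorProduct.map ζWe.toLinearMap ζVe.toLinearMap).comp
          (braid k ractV ζVe.symm.toLinearMap ρW ζWe.symm.toLinearMap
            βe.symm.toLinearMap) := by
  constructor
  · apply TensorProduct.ext'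
    intro v w
    have e1 := claimL k A.toBialg βe hβ ζVe ractV ρV ζWe ρW hW.rcom v w
    have e2 := claimR k A.toBialg βe ζVe ractV ρV ζWe ρW v w
    have e3 := hW.rcom.coassoc w
    rw [← hβ] at e3
    simp only [LinearMap.comp_apply]
    rw [e1, e2, e3]
    exact claimE k A.toBialg βe hβ ζVe ractV ρV ζWe hV.rcom hV.compat v (ρW w)
  · apply TensorProduct.ext'
    intro v w
    have hcz := hW.rcom.coact_zeta w
    rw [← hβ] at hcz
    simp only [LinearEquiv.coe_coe] at hcz
    have hza : ∀ (m : V) (a : H), ζVe (ractV m a) = ractV (ζVe m) (βe a) := by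
      intro m a
      have h := hV.rmod.zeta_act m a
      rw [← hβ] at h
      simpa using h
    simp only [LinearMap.comp_apply, map_tmul, LinearEquiv.coe_coe]
    simp only [braid, LinearMap.comp_apply, map_tmul, LinearEquiv.coe_coe,
      LinearMap.id_coe, id_eq]
    rw [hcz]
    generalize ρW w = t
    induction t using TensorProduct.induction_on with
    | zero => simp
    | add t1 t2 h1 h2 => simp only [map_add, tmul_add, h1, h2]
    | tmul x a => simp [hza]


end HomHopf
end
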